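/- arXiv:2512.09526 — 6 statements merged into one kernel-verified Lean document; each statement's English description precedes it below -/
import Mathlib

section
/- Let Λ, Λ₁, Λ₂ be three A-lattices in ℂ∞ of the same rank r ≥ 1 such that Λ ⊆ Λ₁ ∩ Λ₂. Then Λ₁ ∩ Λ₂ and Λ₁ + Λ₂ are also A-lattices of rank r, and the covolumes satisfy 𝒟(Λ₁ ∩ Λ₂) · 𝒟(Λ₁ + Λ₂) = 𝒟(Λ₁) · 𝒟(Λ₂) (equivalently, log_q 𝒟(Λ₁∩Λ₂) + log_q 𝒟(Λ₁+Λ₂) = log_q 𝒟(Λ₁) + log_q 𝒟(Λ₂)). -/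
/-!
The proof counts lattice points in balls. With the ordering convention of `IsSuccMinBasis`, all vectors of a
successive minimum basis of `L` have the same absolute value `μ`, the minimum of `L`, and the
ultrametric inequality gives `|∑ cᵢ ηᵢ| = q ^ (max deg cᵢ) * μ`; hence the ball of radius `q ^ n * μ`
in `L` has `q ^ ((n + 1) r)` points and the covolume is `μ ^ r`.

Some nonzero `d` satisfies `d Λ₂ ⊆ Λ ⊆ Λ₁`, because `Λ` has full rank in `Λ₂`. This makes
`Λ₁ + Λ₂` discrete of rank `r`, and lets every `s ∈ Λ₁ + Λ₂` be written as `x + y` with `y ∈ Λ₂`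
bounded. So for large `ρ` the map `(x, y) ↦ x + y` sends the `ρ`-balls of `Λ₁ × Λ₂` onto the
`ρ`-ball of `Λ₁ + Λ₂`, with fibres in bijection with the `ρ`-ball of `Λ₁ ∩ Λ₂`. The minima of the
four lattices are `q`-powers times that of `Λ₁ + Λ₂`; counting at a radius `q ^ n` times it and
comparing exponents of `q` gives the product formula.
-/

open Polynomial

/-- An `A`-lattice (`A = Fq[T]`) in `ℂ∞`: a finitely generated `A`-submodule which is
discrete, i.e. meets every bounded ball in a finite set. -/
def IsALattice (Fq : Type*) [Field Fq] {Cinf : Type*} [Field Cinf]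
    [Algebra (Polynomial Fq) Cinf] (abv : AbsoluteValue Cinf ℝ)
    (Λ : Submodule (Polynomial Fq) Cinf) : Prop :=
  Λ.FG ∧ ∀ r : ℝ, {x : Cinf | x ∈ Λ ∧ abv x ≤ r}.Finite

/-- A successive minimum basis of a lattice `Λ`: an `A`-basis `η₁, …, η_r` with
`|η₁| ≥ … ≥ |η_r|` such that each `η_k` has minimal absolute value among the nonzero
elements of `Λ` modulo `A·η_{k+1} + … + A·η_r`. -/
def IsSuccMinBasis (Fq : Type*) [Field Fq] {Cinf : Type*} [Field Cinf]
    [Algebra (Polynomial Fq) Cinf] (abv : AbsoluteValue Cinf ℝ)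
    (Λ : Submodule (Polynomial Fq) Cinf) {r : ℕ} (η : Fin r → Cinf) : Prop :=
  (∀ k, η k ∈ Λ) ∧ LinearIndependent (Polynomial Fq) η ∧
    (∀ x ∈ Λ, x ∈ Submodule.span (Polynomial Fq) (Set.range η)) ∧
    (∀ j k : Fin r, j ≤ k → abv (η k) ≤ abv (η j)) ∧
    (∀ k : Fin r, ∀ x ∈ Λ, ∀ a : Fin r → Polynomial Fq,
      x - ∑ i ∈ Finset.univ.filter (fun i => k < i), a i • η i ≠ 0 →
      abv (η k) ≤ abv (x - ∑ i ∈ Finset.univ.filter (fun i => k < i), a i • η i))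

section Nonarchimedean

variable {S : Type*} [Ring S] {abv : AbsoluteValue S ℝ}

theorem IsNonarchimedean.abv_sub_le (hna : IsNonarchimedean abv) (x y : S) :
    abv (x - y) ≤ max (abv x) (abv y) := by
  simpa only [sub_eq_add_neg, abv.map_neg] using hna x (-y)

theorem IsNonarchimedean.abv_sum_le (hna : IsNonarchimedean abv) {ι : Type*} (s : Finset ι)
    (f : ι → S) {C : ℝ} (hC : 0 ≤ C) (h : ∀ i ∈ s, abv (f i) ≤ C) :
    abv (∑ i ∈ s, f i) ≤ C :=
  Finset.sum_induction f (fun x => abv x ≤ C)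
    (fun a b ha hb => (hna a b).trans (max_le ha hb)) (by simpa using hC) h

theorem IsNonarchimedean.abv_sum_lt (hna : IsNonarchimedean abv) {ι : Type*} (s : Finset ι)
    (f : ι → S) {C : ℝ} (hC : 0 < C) (h : ∀ i ∈ s, abv (f i) < C) :
    abv (∑ i ∈ s, f i) < C :=
  Finset.sum_induction f (fun x => abv x < C)
    (fun a b ha hb => (hna a b).trans_lt (max_lt ha hb)) (by simpa using hC) h

end Nonarchimedean

namespace Submodule

section AbvBall

variable {R S : Type*} [Ring R] [Ring S] [Module R S]

def abvBall (abv : AbsoluteValue S ℝ) (L : Submodule R S) (ρ : ℝ) : Set S :=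
  {x | x ∈ L ∧ abv x ≤ ρ}

variable {abv : AbsoluteValue S ℝ}

/-- `(x, y) ↦ (x + y, x - σ (x + y))` is a bijection, where `σ s` is a chosen `Λ₁`-part of `s`. -/
theorem card_abvBall_mul_card_abvBall (hna : IsNonarchimedean abv) (Λ₁ Λ₂ : Submodule R S)
    {ρ : ℝ} (hdec : ∀ s ∈ abvBall abv (Λ₁ ⊔ Λ₂) ρ,
      ∃ x ∈ abvBall abv Λ₁ ρ, s - x ∈ abvBall abv Λ₂ ρ) :
    Nat.card (abvBall abv Λ₁ ρ) * Nat.card (abvBall abv Λ₂ ρ) =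
      Nat.card (abvBall abv (Λ₁ ⊔ Λ₂) ρ) * Nat.card (abvBall abv (Λ₁ ⊓ Λ₂) ρ) := by
  choose! σ hσ₁ hσ₂ using hdec
  have hadd : ∀ x ∈ abvBall abv Λ₁ ρ, ∀ y ∈ abvBall abv Λ₂ ρ, x + y ∈ abvBall abv (Λ₁ ⊔ Λ₂) ρ :=
    fun x hx y hy => ⟨add_mem (mem_sup_left hx.1) (mem_sup_right hy.1),
      (hna x y).trans (max_le hx.2 hy.2)⟩
  rw [← Nat.card_prod, ← Nat.card_prod]
  refine Nat.card_congr
    { toFun := fun p => (⟨p.1 + p.2, hadd _ p.1.2 _ p.2.2⟩,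
        ⟨p.1 - σ (p.1 + p.2), ?_, ?_⟩)
      invFun := fun p => (⟨σ p.1 + p.2, ?_, ?_⟩, ⟨p.1 - σ p.1 - p.2, ?_, ?_⟩)
      left_inv := fun p => ?_
      right_inv := fun p => ?_ }
  · have hdiff : p.1 - σ (p.1 + p.2) = (p.1 + p.2 - σ (p.1 + p.2)) - p.2 := by abel
    refine mem_inf.2 ⟨sub_mem p.1.2.1 (hσ₁ _ (hadd _ p.1.2 _ p.2.2)).1, ?_⟩
    rw [hdiff]
    exact sub_mem (hσ₂ _ (hadd _ p.1.2 _ p.2.2)).1 p.2.2.1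
  · exact (hna.abv_sub_le _ _).trans (max_le p.1.2.2 (hσ₁ _ (hadd _ p.1.2 _ p.2.2)).2)
  · exact add_mem (hσ₁ _ p.1.2).1 (mem_inf.1 p.2.2.1).1
  · exact (hna _ _).trans (max_le (hσ₁ _ p.1.2).2 p.2.2.2)
  · exact sub_mem (hσ₂ _ p.1.2).1 (mem_inf.1 p.2.2.1).2
  · exact (hna.abv_sub_le _ _).trans (max_le (hσ₂ _ p.1.2).2 p.2.2.2)
  · ext <;> simp only [add_sub_cancel, sub_sub_sub_cancel_right, add_sub_cancel_left]
  · have hs : σ p.1 + p.2 + (p.1 - σ p.1 - p.2) = p.1 := by abel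
    ext <;> simp only [hs, add_sub_cancel_left]

end AbvBall

section Rank

variable {R V : Type*} [CommRing R] [AddCommGroup V] [Module R V] {M N : Submodule R V}

theorem smul_mem_of_mem_sup {d : R} (h : ∀ x ∈ N, d • x ∈ M) : ∀ x ∈ M ⊔ N, d • x ∈ M := by
  intro x hx
  obtain ⟨u, hu, v, hv, rfl⟩ := mem_sup.1 hx
  rw [smul_add]
  exact add_mem (M.smul_mem d hu) (h v hv)

/-- A submodule of full rank has torsion quotient, and a finitely generated torsion module has a
nonzero annihilator. -/
theorem exists_ne_zero_smul_mem_of_finrank_eq [IsDomain R] (hMN : M ≤ N) (hN : N.FG)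
    (h : Module.finrank R M = Module.finrank R N) : ∃ d : R, d ≠ 0 ∧ ∀ x ∈ N, d • x ∈ M := by
  have : Module.Finite R N := Module.Finite.iff_fg.2 hN
  set M' : Submodule R N := M.comap N.subtype
  have hquot : Module.finrank R (N ⧸ M') = 0 := by
    have := M'.finrank_quotient_add_finrank
    rw [(comapSubtypeEquivOfLe hMN).finrank_eq, h] at this
    omega
  have htors : Module.IsTorsion R (N ⧸ M') := fun {x} => by
    obtain ⟨a, ha, hax⟩ := Module.finrank_eq_zero_iff.1 hquot x
    exact ⟨⟨a, mem_nonZeroDivisors_of_ne_zero ha⟩, hax⟩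
  obtain ⟨d, hd, hd₀⟩ := annihilator_top_inter_nonZeroDivisors htors
  refine ⟨d, nonZeroDivisors.ne_zero hd₀, fun x hx => ?_⟩
  have := mem_annihilator.1 hd (Quotient.mk ⟨x, hx⟩) mem_top
  rwa [← Quotient.mk_smul, Quotient.mk_eq_zero] at this

theorem finrank_le_finrank_of_smul_mem [IsDomain R] [Module.IsTorsionFree R V] (hM : M.FG)
    {d : R} (hd : d ≠ 0) (h : ∀ x ∈ N, d • x ∈ M) : Module.finrank R N ≤ Module.finrank R M := by
  have : Module.Finite R M := Module.Finite.iff_fg.2 hM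
  let f : V →ₗ[R] V := d • LinearMap.id
  rw [(N.equivMapOfInjective f (smul_right_injective V hd)).finrank_eq]
  exact finrank_mono (map_le_iff_le_comap.2 h)

end Rank

end Submodule

namespace Polynomial

theorem mem_degreeLT_succ_iff {R : Type*} [Semiring R] {p : R[X]} {n : ℕ} :
    p ∈ R[X]_(n + 1) ↔ p.natDegree ≤ n := by
  rw [mem_degreeLT, degree_lt_iff_coeff_zero, natDegree_le_iff_coeff_eq_zero]
  rfl

theorem degree_sub_monomial_coeff_lt {R : Type*} [Ring R] {p : R[X]} {n : ℕ}
    (hp : p.natDegree ≤ n) : (p - monomial n (p.coeff n)).degree < n := by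
  rw [degree_lt_iff_coeff_zero]
  intro m hm
  rw [coeff_sub, coeff_monomial]
  rcases hm.eq_or_lt with rfl | hlt
  · simp
  · rw [if_neg hlt.ne, coeff_eq_zero_of_natDegree_lt (hp.trans_lt hlt), sub_zero]

theorem exists_coeff_sup_natDegree_ne_zero {R ι : Type*} [Semiring R] [Fintype ι]
    {c : ι → R[X]} (hc : c ≠ 0) :
    ∃ i₀, (c i₀).coeff (Finset.univ.sup fun i => (c i).natDegree) ≠ 0 := by
  classical
  obtain ⟨i, hi⟩ := Function.ne_iff.1 hc
  obtain ⟨i₀, hi₀, hmax⟩ := Finset.exists_max_image (Finset.univ.filter (c · ≠ 0))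
    (fun i => (c i).natDegree) ⟨i, by simpa using hi⟩
  have hD : (Finset.univ.sup fun i => (c i).natDegree) = (c i₀).natDegree := by
    refine le_antisymm (Finset.sup_le fun i _ => ?_)
      (Finset.le_sup (f := fun i => (c i).natDegree) (Finset.mem_univ i₀))
    rcases eq_or_ne (c i) 0 with h | h
    · simp [h]
    · exact hmax i (by simpa using h)
  exact ⟨i₀, hD ▸ leadingCoeff_ne_zero.2 (by simpa using hi₀)⟩

end Polynomial

section Lattice

variable {Fq Cinf : Type*} [Field Fq] [Field Cinf] [Algebra Fq[X] Cinf]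
  {abv : AbsoluteValue Cinf ℝ} {L : Submodule Fq[X] Cinf} {r : ℕ} {η : Fin r → Cinf}

theorem IsALattice.inf {Λ₁ : Submodule Fq[X] Cinf} (h : IsALattice Fq abv Λ₁)
    (Λ₂ : Submodule Fq[X] Cinf) : IsALattice Fq abv (Λ₁ ⊓ Λ₂) :=
  ⟨h.1.of_le inf_le_left, fun ρ => (h.2 ρ).subset fun _ hx => ⟨hx.1.1, hx.2⟩⟩

namespace IsSuccMinBasis

/-- `η 0` is the largest basis vector, yet minimal among all nonzero vectors of `L`
(the condition at `k = 0` with `a = 0`); so all `η i` have the same absolute value. -/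
theorem abv_le (hb : IsSuccMinBasis Fq abv L η) (i : Fin r) {x : Cinf} (hx : x ∈ L)
    (hx₀ : x ≠ 0) : abv (η i) ≤ abv x := by
  refine (hb.2.2.2.1 ⟨0, i.pos⟩ i (Nat.zero_le _)).trans ?_
  simpa using hb.2.2.2.2 ⟨0, i.pos⟩ x hx 0 (by simpa using hx₀)

theorem abv_eq (hb : IsSuccMinBasis Fq abv L η) (i j : Fin r) : abv (η i) = abv (η j) :=
  le_antisymm (hb.abv_le i (hb.1 j) (hb.2.1.ne_zero j)) (hb.abv_le j (hb.1 i) (hb.2.1.ne_zero i))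

theorem prod_abv (hb : IsSuccMinBasis Fq abv L η) (j : Fin r) :
    ∏ i, abv (η i) = abv (η j) ^ r := by
  simp [hb.abv_eq _ j]

end IsSuccMinBasis

end Lattice

section FiniteField

variable {Fq Cinf : Type*} [Field Fq] [Fintype Fq] [Field Cinf] [Algebra Fq[X] Cinf]
  {abv : AbsoluteValue Cinf ℝ} {L : Submodule Fq[X] Cinf} {r : ℕ} {η : Fin r → Cinf}

local notation "q" => (Fintype.card Fq : ℝ)

theorem one_lt_card_real : 1 < q := by
  exact_mod_cast Fintype.one_lt_card

theorem abv_smul_eq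
    (habv : ∀ a : Fq[X], a ≠ 0 → abv (algebraMap Fq[X] Cinf a) = q ^ a.natDegree)
    {a : Fq[X]} (ha : a ≠ 0) (x : Cinf) : abv (a • x) = q ^ a.natDegree * abv x := by
  rw [Algebra.smul_def, map_mul, habv a ha]

theorem abv_smul_le_of_natDegree_le
    (habv : ∀ a : Fq[X], a ≠ 0 → abv (algebraMap Fq[X] Cinf a) = q ^ a.natDegree)
    {a : Fq[X]} {n : ℕ} (ha : a.natDegree ≤ n) (x : Cinf) : abv (a • x) ≤ q ^ n * abv x := by
  rcases eq_or_ne a 0 with rfl | ha₀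
  · simp only [zero_smul, map_zero]
    positivity
  rw [abv_smul_eq habv ha₀]
  exact mul_le_mul_of_nonneg_right (pow_le_pow_right₀ one_lt_card_real.le ha) (abv.nonneg x)

theorem abv_smul_lt_of_degree_lt
    (habv : ∀ a : Fq[X], a ≠ 0 → abv (algebraMap Fq[X] Cinf a) = q ^ a.natDegree)
    {a : Fq[X]} {n : ℕ} (ha : a.degree < n) {x : Cinf} (hx : x ≠ 0) :
    abv (a • x) < q ^ n * abv x := by
  have hx' : 0 < abv x := abv.pos hx
  rcases eq_or_ne a 0 with rfl | ha₀
  · simp only [zero_smul, map_zero]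
    positivity
  rw [abv_smul_eq habv ha₀]
  exact mul_lt_mul_of_pos_right
    (pow_lt_pow_right₀ one_lt_card_real ((natDegree_lt_iff_degree_lt ha₀).2 ha)) hx'

theorem isTorsionFree_of_abv
    (habv : ∀ a : Fq[X], a ≠ 0 → abv (algebraMap Fq[X] Cinf a) = q ^ a.natDegree) :
    Module.IsTorsionFree Fq[X] Cinf := by
  refine Module.isTorsionFree_iff_algebraMap_injective.2 <|
    (injective_iff_map_eq_zero _).2 fun a ha => ?_
  by_contra ha₀
  have := habv a ha₀
  rw [ha, map_zero] at this
  exact (pow_pos (zero_lt_one.trans one_lt_card_real) _).ne' this.symm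

/-- Multiplication by `d` maps `Λ₁ ⊔ Λ₂` into `Λ₁` and scales `abv` by `q ^ deg d`. -/
theorem IsALattice.sup
    (habv : ∀ a : Fq[X], a ≠ 0 → abv (algebraMap Fq[X] Cinf a) = q ^ a.natDegree)
    {Λ₁ Λ₂ : Submodule Fq[X] Cinf} (h₁ : IsALattice Fq abv Λ₁) (h₂ : Λ₂.FG) {d : Fq[X]}
    (hd : d ≠ 0) (h : ∀ x ∈ Λ₂, d • x ∈ Λ₁) : IsALattice Fq abv (Λ₁ ⊔ Λ₂) := by
  have : Module.IsTorsionFree Fq[X] Cinf := isTorsionFree_of_abv habv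
  refine ⟨h₁.1.sup h₂, fun ρ => ?_⟩
  refine ((h₁.2 (q ^ d.natDegree * ρ)).preimage (smul_right_injective Cinf hd).injOn).subset ?_
  rintro x ⟨hx, hxρ⟩
  refine ⟨Submodule.smul_mem_of_mem_sup h x hx, ?_⟩
  rw [abv_smul_eq habv hd]
  gcongr

/-- Reduce the coordinates of `v ∈ Λ₂` on a finite generating set modulo `d`: the remainder is
bounded, and the rest lies in `d • Λ₂ ⊆ Λ₁`. -/
theorem exists_abv_le_sub_mem_of_smul_mem
    (habv : ∀ a : Fq[X], a ≠ 0 → abv (algebraMap Fq[X] Cinf a) = q ^ a.natDegree)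
    (hna : IsNonarchimedean abv) {Λ₁ Λ₂ : Submodule Fq[X] Cinf} (h₂ : Λ₂.FG) {d : Fq[X]}
    (hd : d ≠ 0) (h : ∀ x ∈ Λ₂, d • x ∈ Λ₁) :
    ∃ C : ℝ, ∀ s ∈ Λ₁ ⊔ Λ₂, ∃ y ∈ Λ₂, abv y ≤ C ∧ s - y ∈ Λ₁ := by
  obtain ⟨G, rfl⟩ := h₂
  have hG : ∀ g ∈ G, g ∈ Submodule.span Fq[X] (G : Set Cinf) := fun g hg =>
    Submodule.subset_span hg
  refine ⟨q ^ d.natDegree * ∑ g ∈ G, abv g, fun s hs => ?_⟩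
  obtain ⟨u, hu, v, hv, rfl⟩ := Submodule.mem_sup.1 hs
  obtain ⟨c, -, rfl⟩ := Submodule.mem_span_finset.1 hv
  refine ⟨∑ g ∈ G, (c g % d) • g, sum_mem fun g hg => Submodule.smul_mem _ _ (hG g hg), ?_, ?_⟩
  · refine hna.abv_sum_le _ _ (by positivity) fun g hg => ?_
    calc abv ((c g % d) • g) ≤ q ^ d.natDegree * abv g :=
          abv_smul_le_of_natDegree_le habv (natDegree_le_natDegree (degree_mod_lt _ hd).le) g
      _ ≤ q ^ d.natDegree * ∑ g ∈ G, abv g := by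
          gcongr
          exact Finset.single_le_sum (fun g _ => abv.nonneg g) hg
  · have hdiv : ∑ g ∈ G, c g • g - ∑ g ∈ G, (c g % d) • g = d • ∑ g ∈ G, (c g / d) • g := by
      rw [← Finset.sum_sub_distrib, Finset.smul_sum]
      refine Finset.sum_congr rfl fun g _ => ?_
      rw [smul_smul, ← sub_smul]
      congr 1
      linear_combination -EuclideanDomain.mod_add_div (c g) d
    rw [add_sub_assoc, hdiv]
    exact add_mem hu (h _ (sum_mem fun g hg => Submodule.smul_mem _ _ (hG g hg)))

namespace IsSuccMinBasis

/-- Split off the leading part `X ^ D • v` with `v = ∑ C (coeff_D (c i)) • η i`: `v` is a nonzero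
vector of `L` of norm at most `|η j|`, hence exactly `|η j|`, and the rest is strictly smaller. -/
theorem abv_sum_smul
    (habv : ∀ a : Fq[X], a ≠ 0 → abv (algebraMap Fq[X] Cinf a) = q ^ a.natDegree)
    (hna : IsNonarchimedean abv) (hb : IsSuccMinBasis Fq abv L η) {c : Fin r → Fq[X]}
    (hc : c ≠ 0) (j : Fin r) :
    abv (∑ i, c i • η i) = q ^ (Finset.univ.sup fun i => (c i).natDegree) * abv (η j) := by
  set D := Finset.univ.sup fun i => (c i).natDegree
  have hη : 0 < abv (η j) := abv.pos (hb.2.1.ne_zero j)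
  have hle : ∀ i, (c i).natDegree ≤ D := fun i =>
    Finset.le_sup (f := fun i => (c i).natDegree) (Finset.mem_univ i)
  obtain ⟨i₀, hi₀⟩ := exists_coeff_sup_natDegree_ne_zero hc
  set v := ∑ i, C ((c i).coeff D) • η i
  have hv₀ : v ≠ 0 := fun h =>
    hi₀ (C_eq_zero.1 (Fintype.linearIndependent_iff.1 hb.2.1 _ h i₀))
  have hv : abv v = abv (η j) := by
    refine le_antisymm (hna.abv_sum_le _ _ hη.le fun i _ => ?_)
      (hb.abv_le j (sum_mem fun i _ => L.smul_mem _ (hb.1 i)) hv₀)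
    simpa [hb.abv_eq i j] using abv_smul_le_of_natDegree_le habv (natDegree_C _).le (η i)
  have hsplit : ∑ i, c i • η i =
      ∑ i, (c i - monomial D ((c i).coeff D)) • η i + (X ^ D : Fq[X]) • v := by
    rw [Finset.smul_sum, ← Finset.sum_add_distrib]
    refine Finset.sum_congr rfl fun i _ => ?_
    rw [smul_smul, ← add_smul, ← C_mul_X_pow_eq_monomial, mul_comm, sub_add_cancel]
  have hrest : abv (∑ i, (c i - monomial D ((c i).coeff D)) • η i) < q ^ D * abv (η j) := by
    refine hna.abv_sum_lt _ _ (by positivity) fun i _ => ?_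
    rw [← hb.abv_eq i j]
    exact abv_smul_lt_of_degree_lt habv (degree_sub_monomial_coeff_lt (hle i)) (hb.2.1.ne_zero i)
  have hlead : abv ((X ^ D : Fq[X]) • v) = q ^ D * abv (η j) := by
    rw [abv_smul_eq habv (pow_ne_zero D X_ne_zero), natDegree_X_pow, hv]
  rw [hsplit, hna.add_eq_right_of_lt (hlead ▸ hrest), hlead]

theorem exists_abv_eq_pow_mul
    (habv : ∀ a : Fq[X], a ≠ 0 → abv (algebraMap Fq[X] Cinf a) = q ^ a.natDegree)
    (hna : IsNonarchimedean abv) (hb : IsSuccMinBasis Fq abv L η) {x : Cinf} (hx : x ∈ L)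
    (hx₀ : x ≠ 0) (j : Fin r) : ∃ k : ℕ, abv x = q ^ k * abv (η j) := by
  obtain ⟨c, rfl⟩ := (Submodule.mem_span_range_iff_exists_fun _).1 (hb.2.2.1 x hx)
  have hc : c ≠ 0 := by
    rintro rfl
    simp at hx₀
  exact ⟨_, hb.abv_sum_smul habv hna hc j⟩

theorem abv_sum_smul_le_iff
    (habv : ∀ a : Fq[X], a ≠ 0 → abv (algebraMap Fq[X] Cinf a) = q ^ a.natDegree)
    (hna : IsNonarchimedean abv) (hb : IsSuccMinBasis Fq abv L η) (c : Fin r → Fq[X]) (n : ℕ)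
    (j : Fin r) : abv (∑ i, c i • η i) ≤ q ^ n * abv (η j) ↔ ∀ i, (c i).natDegree ≤ n := by
  have hη : 0 < abv (η j) := abv.pos (hb.2.1.ne_zero j)
  rcases eq_or_ne c 0 with rfl | hc
  · simp only [Pi.zero_apply, zero_smul, Finset.sum_const_zero, map_zero, natDegree_zero,
      zero_le, implies_true, iff_true]
    positivity
  rw [hb.abv_sum_smul habv hna hc j, mul_le_mul_iff_left₀ hη,
    pow_le_pow_iff_right₀ one_lt_card_real, Finset.sup_le_iff]
  simp

theorem card_abvBall
    (habv : ∀ a : Fq[X], a ≠ 0 → abv (algebraMap Fq[X] Cinf a) = q ^ a.natDegree)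
    (hna : IsNonarchimedean abv) (hb : IsSuccMinBasis Fq abv L η) (n : ℕ) (j : Fin r) :
    Nat.card (L.abvBall abv (q ^ n * abv (η j))) = Fintype.card Fq ^ ((n + 1) * r) := by
  let φ : (Fin r → Fq[X]_(n + 1)) → Cinf := fun c => ∑ i, (c i : Fq[X]) • η i
  have hφ : Function.Injective φ := fun a b hab =>
    funext fun i => Subtype.ext (Fintype.linearIndependent_iffₛ.1 hb.2.1 _ _ hab i)
  have hrange : Set.range φ = L.abvBall abv (q ^ n * abv (η j)) := by
    ext x
    constructor
    · rintro ⟨c, rfl⟩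
      exact ⟨sum_mem fun i _ => L.smul_mem _ (hb.1 i), (hb.abv_sum_smul_le_iff habv hna _ n j).2
        fun i => mem_degreeLT_succ_iff.1 (c i).2⟩
    · rintro ⟨hx, hxρ⟩
      obtain ⟨c, rfl⟩ := (Submodule.mem_span_range_iff_exists_fun _).1 (hb.2.2.1 x hx)
      exact ⟨fun i => ⟨c i, mem_degreeLT_succ_iff.2 ((hb.abv_sum_smul_le_iff habv hna c n j).1
        hxρ i)⟩, rfl⟩
  rw [← hrange, Nat.card_range_of_injective hφ, Nat.card_fun,
    Nat.card_congr (degreeLTEquiv Fq (n + 1)).toEquiv, Nat.card_fun]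
  simp [pow_mul]

theorem card_abvBall_of_abv_eq
    (habv : ∀ a : Fq[X], a ≠ 0 → abv (algebraMap Fq[X] Cinf a) = q ^ a.natDegree)
    (hna : IsNonarchimedean abv) (hb : IsSuccMinBasis Fq abv L η) {j : Fin r} {m : ℝ}
    {k n : ℕ} (hkn : k ≤ n) (hηj : abv (η j) = q ^ k * m) :
    Nat.card (L.abvBall abv (q ^ n * m)) = Fintype.card Fq ^ ((n - k + 1) * r) := by
  rw [← hb.card_abvBall habv hna (n - k) j, hηj, ← mul_assoc, ← pow_add, Nat.sub_add_cancel hkn]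

end IsSuccMinBasis

theorem prod_abv_inf_mul_prod_abv_sup
    (habv : ∀ a : Fq[X], a ≠ 0 → abv (algebraMap Fq[X] Cinf a) = q ^ a.natDegree)
    (hna : IsNonarchimedean abv) {Λ₁ Λ₂ : Submodule Fq[X] Cinf}
    (hdec : ∃ C : ℝ, ∀ s ∈ Λ₁ ⊔ Λ₂, ∃ y ∈ Λ₂, abv y ≤ C ∧ s - y ∈ Λ₁)
    (hr : 1 ≤ r) {η₁ η₂ ηinf ηsup : Fin r → Cinf}
    (hb₁ : IsSuccMinBasis Fq abv Λ₁ η₁) (hb₂ : IsSuccMinBasis Fq abv Λ₂ η₂)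
    (hbinf : IsSuccMinBasis Fq abv (Λ₁ ⊓ Λ₂) ηinf) (hbsup : IsSuccMinBasis Fq abv (Λ₁ ⊔ Λ₂) ηsup) :
    (∏ i, abv (ηinf i)) * (∏ i, abv (ηsup i)) = (∏ i, abv (η₁ i)) * (∏ i, abv (η₂ i)) := by
  obtain ⟨C, hC⟩ := hdec
  set j : Fin r := ⟨0, hr⟩
  set m := abv (ηsup j)
  have hm : 0 < m := abv.pos (hbsup.2.1.ne_zero j)
  obtain ⟨k₁, hk₁⟩ := hbsup.exists_abv_eq_pow_mul habv hna
    (Submodule.mem_sup_left (hb₁.1 j)) (hb₁.2.1.ne_zero j) j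
  obtain ⟨k₂, hk₂⟩ := hbsup.exists_abv_eq_pow_mul habv hna
    (Submodule.mem_sup_right (hb₂.1 j)) (hb₂.2.1.ne_zero j) j
  obtain ⟨k, hk⟩ := hbsup.exists_abv_eq_pow_mul habv hna
    (Submodule.mem_sup_left (hbinf.1 j).1) (hbinf.2.1.ne_zero j) j
  have hq : 1 < q := one_lt_card_real
  obtain ⟨n₀, hn₀⟩ := pow_unbounded_of_one_lt (C / m) hq
  set n := n₀ + k₁ + k₂ + k
  have hCR : C ≤ q ^ n * m :=
    calc C ≤ q ^ n₀ * m := ((div_lt_iff₀ hm).1 hn₀).le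
      _ ≤ q ^ n * m := by gcongr <;> [exact hq.le; omega]
  have hdc := Submodule.card_abvBall_mul_card_abvBall hna Λ₁ Λ₂ (ρ := q ^ n * m) fun s hs => by
    obtain ⟨y, hy, hyC, hsy⟩ := hC s hs.1
    refine ⟨s - y, ⟨hsy, (hna.abv_sub_le s y).trans (max_le hs.2 (hyC.trans hCR))⟩, ?_⟩
    rw [sub_sub_cancel]
    exact ⟨hy, hyC.trans hCR⟩
  rw [hb₁.card_abvBall_of_abv_eq habv hna (by omega) hk₁,
    hb₂.card_abvBall_of_abv_eq habv hna (by omega) hk₂,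
    hbinf.card_abvBall_of_abv_eq habv hna (by omega) hk,
    hbsup.card_abvBall_of_abv_eq habv hna (k := 0) (by omega) (one_mul m).symm,
    ← pow_add, ← pow_add, ← add_mul, ← add_mul] at hdc
  have hkk : k = k₁ + k₂ := by
    have := Nat.eq_of_mul_eq_mul_right hr (Nat.pow_right_injective Fintype.one_lt_card hdc)
    omega
  rw [hb₁.prod_abv j, hb₂.prod_abv j, hbinf.prod_abv j, hbsup.prod_abv j, hk₁, hk₂, hk, hkk]
  ring

end FiniteField

theorem stmt0_general {Fq Cinf : Type*} [Field Fq] [Fintype Fq] [Field Cinf]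
    [Algebra (Polynomial Fq) Cinf]
    (abv : AbsoluteValue Cinf ℝ)
    (hna : ∀ x y : Cinf, abv (x + y) ≤ max (abv x) (abv y))
    (habv : ∀ a : Polynomial Fq, a ≠ 0 →
      abv (algebraMap (Polynomial Fq) Cinf a) = (Fintype.card Fq : ℝ) ^ a.natDegree)
    (r : ℕ) (hr : 1 ≤ r)
    (Λ Λ₁ Λ₂ : Submodule (Polynomial Fq) Cinf)
    (hΛ₁ : IsALattice Fq abv Λ₁) (hΛ₂ : IsALattice Fq abv Λ₂)
    (hrk : Module.finrank (Polynomial Fq) Λ = r)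
    (hrk₁ : Module.finrank (Polynomial Fq) Λ₁ = r)
    (hrk₂ : Module.finrank (Polynomial Fq) Λ₂ = r)
    (hsub : Λ ≤ Λ₁ ⊓ Λ₂) :
    IsALattice Fq abv (Λ₁ ⊓ Λ₂) ∧ IsALattice Fq abv (Λ₁ ⊔ Λ₂) ∧
    Module.finrank (Polynomial Fq) ↥(Λ₁ ⊓ Λ₂ : Submodule (Polynomial Fq) Cinf) = r ∧
    Module.finrank (Polynomial Fq) ↥(Λ₁ ⊔ Λ₂ : Submodule (Polynomial Fq) Cinf) = r ∧
    ∀ (η₁ η₂ ηinf ηsup : Fin r → Cinf),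
      IsSuccMinBasis Fq abv Λ₁ η₁ → IsSuccMinBasis Fq abv Λ₂ η₂ →
      IsSuccMinBasis Fq abv (Λ₁ ⊓ Λ₂) ηinf → IsSuccMinBasis Fq abv (Λ₁ ⊔ Λ₂) ηsup →
      (∏ i, abv (ηinf i)) * (∏ i, abv (ηsup i)) =
        (∏ i, abv (η₁ i)) * (∏ i, abv (η₂ i)) := by
  have : Module.IsTorsionFree Fq[X] Cinf := isTorsionFree_of_abv habv
  obtain ⟨d, hd, hdΛ⟩ := Submodule.exists_ne_zero_smul_mem_of_finrank_eq
    (hsub.trans inf_le_right) hΛ₂.1 (hrk.trans hrk₂.symm)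
  have hdΛ₁ : ∀ x ∈ Λ₂, d • x ∈ Λ₁ := fun x hx => (hsub (hdΛ x hx)).1
  have hinf := hΛ₁.inf Λ₂
  have hsup := hΛ₁.sup habv hΛ₂.1 hd hdΛ₁
  have : Module.Finite Fq[X] Λ₁ := Module.Finite.iff_fg.2 hΛ₁.1
  have : Module.Finite Fq[X] ↥(Λ₁ ⊓ Λ₂) := Module.Finite.iff_fg.2 hinf.1
  have : Module.Finite Fq[X] ↥(Λ₁ ⊔ Λ₂) := Module.Finite.iff_fg.2 hsup.1
  refine ⟨hinf, hsup, ?_, ?_, fun η₁ η₂ ηinf ηsup =>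
    prod_abv_inf_mul_prod_abv_sup habv hna
      (exists_abv_le_sub_mem_of_smul_mem habv hna hΛ₂.1 hd hdΛ₁) hr⟩
  · exact le_antisymm (hrk₁ ▸ Submodule.finrank_mono inf_le_left)
      (hrk ▸ Submodule.finrank_mono hsub)
  · exact le_antisymm (hrk₁ ▸ Submodule.finrank_le_finrank_of_smul_mem hΛ₁.1 hd
      (Submodule.smul_mem_of_mem_sup hdΛ₁)) (hrk₁ ▸ Submodule.finrank_mono le_sup_left)

theorem stmt0 {Fq Cinf : Type*} [Field Fq] [Fintype Fq] [Field Cinf]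
    [Algebra (Polynomial Fq) Cinf] [IsAlgClosed Cinf]
    (abv : AbsoluteValue Cinf ℝ)
    (hna : ∀ x y : Cinf, abv (x + y) ≤ max (abv x) (abv y))
    (habv : ∀ a : Polynomial Fq, a ≠ 0 →
      abv (algebraMap (Polynomial Fq) Cinf a) = (Fintype.card Fq : ℝ) ^ a.natDegree)
    (r : ℕ) (hr : 1 ≤ r)
    (Λ Λ₁ Λ₂ : Submodule (Polynomial Fq) Cinf)
    (hΛ : IsALattice Fq abv Λ) (hΛ₁ : IsALattice Fq abv Λ₁) (hΛ₂ : IsALattice Fq abv Λ₂)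
    (hrk : Module.finrank (Polynomial Fq) Λ = r)
    (hrk₁ : Module.finrank (Polynomial Fq) Λ₁ = r)
    (hrk₂ : Module.finrank (Polynomial Fq) Λ₂ = r)
    (hsub : Λ ≤ Λ₁ ⊓ Λ₂) :
    IsALattice Fq abv (Λ₁ ⊓ Λ₂) ∧ IsALattice Fq abv (Λ₁ ⊔ Λ₂) ∧
    Module.finrank (Polynomial Fq) ↥(Λ₁ ⊓ Λ₂ : Submodule (Polynomial Fq) Cinf) = r ∧
    Module.finrank (Polynomial Fq) ↥(Λ₁ ⊔ Λ₂ : Submodule (Polynomial Fq) Cinf) = r ∧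
    ∀ (η₁ η₂ ηinf ηsup : Fin r → Cinf),
      IsSuccMinBasis Fq abv Λ₁ η₁ → IsSuccMinBasis Fq abv Λ₂ η₂ →
      IsSuccMinBasis Fq abv (Λ₁ ⊓ Λ₂) ηinf → IsSuccMinBasis Fq abv (Λ₁ ⊔ Λ₂) ηsup →
      (∏ i, abv (ηinf i)) * (∏ i, abv (ηsup i)) =
        (∏ i, abv (η₁ i)) * (∏ i, abv (η₂ i)) :=
  stmt0_general abv hna habv r hr Λ Λ₁ Λ₂ hΛ₁ hΛ₂ hrk hrk₁ hrk₂ hsub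
end

section
/- Let F be a field containing 𝔽q, equipped with a non-archimedean additive valuation ν on F extended to an algebraic closure F̄ with values in ℚ ∪ {∞}. Let a ∈ F with ν(a) = 0, and let φ, ψ₁, ψ₂, ψ₃ ∈ F[X] be q-linearized polynomials of degree > 1, each having coefficient of X equal to a. Suppose f, g, ℓ ∈ F[X] are normalized q-linearized polynomials satisfying f ∘ φ = ψ₁ ∘ f, g ∘ φ = ψ₂ ∘ g, ℓ ∘ φ = ψ₃ ∘ ℓ, such that ker(f) ∩ ker(g) = {0} and ker(ℓ) = ker(f) + ker(g) (sum of 𝔽q-subspaces of F̄). For a q-linearized h = Σ h_i X^{q^i} of degree > 1 set λ_ν(h) = −min{ν(h_i)/(q^i − 1) : i ≥ 1, h_i ≠ 0}. Then λ_ν(φ) + λ_ν(ψ₃) ≤ λ_ν(ψ₁) + λ_ν(ψ₂). (This is the local parallelogram inequality for the graded height of Drinfeld modules in an isogeny parallelogram.) -/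
open Polynomial Pointwise

/-- A polynomial is `q`-linearized if it is of the form `Σ fᵢ X^(qⁱ)`. -/
def IsqLin {F : Type*} [Field F] (q : ℕ) (f : Polynomial F) : Prop :=
  ∀ n, f.coeff n ≠ 0 → ∃ i : ℕ, n = q ^ i

/-- The set of roots of `f` in an algebraic closure of `F`. -/
def kerSet {F : Type*} [Field F] (f : Polynomial F) : Set (AlgebraicClosure F) :=
  {β | Polynomial.aeval β f = 0}

/-- `λ_ν(h) = − min { ν(hᵢ)/(qⁱ − 1) : i ≥ 1, hᵢ ≠ 0 }`. -/
noncomputable def lamNu {F : Type*} [Field F] (q : ℕ) (ν : F → ℚ) (h : Polynomial F) : ℝ :=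
  - sInf {y : ℝ | ∃ i : ℕ, 1 ≤ i ∧ h.coeff (q ^ i) ≠ 0 ∧
      y = (ν (h.coeff (q ^ i)) : ℝ) / ((q : ℝ) ^ i - 1)}

/-!
Let `‖P‖_r = max_n |P_n| r ^ n` be the Gauss norm of the absolute value `|x| = exp (-ν x)`. It is
multiplicative (Gauss's lemma), and since raising to a power of the characteristic is additive,
`‖f ∘ g‖_r = ‖f‖_{‖g‖_r}` for `q`-linearized `f`. When `|H_1| = 1`, `exp (-λ_ν(H))` is the critical
radius of `H`, beyond which `‖H‖_r > r`; applying the composition rule to `f ∘ φ = ψ ∘ f` shows that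
the critical radius of `ψ` is `‖f‖_R`, where `R` is the critical radius of `φ`.
A normalized `q`-linearized `f` is separable, so `f = X ∏ (1 - X / w)` over the nonzero `w ∈ ker f`
and `‖f‖_r = r ∏ max 1 (r / |w|)`. All factors are `≥ 1`, and the nonzero parts of `ker f` and
`ker g` are disjoint subsets of that of `ker ℓ`, so `‖f‖_R ‖g‖_R ≤ R ‖ℓ‖_R`; this is the claim after
taking logarithms.
-/

namespace IsqLin

variable {F : Type*} [Field F] {q : ℕ} {f : F[X]}

lemma coeff_zero_eq_zero (hq : q ≠ 0) (hf : IsqLin q f) : f.coeff 0 = 0 := by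
  by_contra h
  obtain ⟨i, hi⟩ := hf 0 h
  exact pow_ne_zero i hq hi.symm

lemma map {K : Type*} [Field K] (σ : F →+* K) (hf : IsqLin q f) : IsqLin q (f.map σ) :=
  fun n hn => hf n fun h => hn (by rw [coeff_map, h, map_zero])

lemma of_pow {e : ℕ} (hf : IsqLin (q ^ e) f) : IsqLin q f := fun n hn => by
  obtain ⟨i, rfl⟩ := hf n hn
  exact ⟨e * i, (pow_mul q e i).symm⟩

lemma derivative_eq (hq : (q : F) = 0) (hf : IsqLin q f) : derivative f = C (f.coeff 1) := by
  ext k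
  rw [coeff_derivative, coeff_C]
  rcases eq_or_ne k 0 with rfl | hk
  · simp
  rw [if_neg hk]
  by_cases hc : f.coeff (k + 1) = 0
  · rw [hc, zero_mul]
  obtain ⟨i, hi⟩ := hf (k + 1) hc
  have hi0 : i ≠ 0 := by rintro rfl; simp at hi; omega
  have hk1 : (k : F) + 1 = 0 := by rw [← Nat.cast_add_one, hi, Nat.cast_pow, hq, zero_pow hi0]
  rw [hk1, mul_zero]

end IsqLin

section ExpAbs

variable {K : Type*} [Field K] (ν : K → ℚ)

open Classical in
/-- `x ↦ exp (-ν x)`, with the junk value `ν 0` replaced by `exp (-∞) = 0`. -/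
noncomputable def expVal (x : K) : ℝ := if x = 0 then 0 else Real.exp (-ν x)

lemma expVal_of_ne_zero {x : K} (hx : x ≠ 0) : expVal ν x = Real.exp (-ν x) := if_neg hx

lemma isNonarchimedean_expVal
    (hadd : ∀ x y : K, x ≠ 0 → y ≠ 0 → x + y ≠ 0 → min (ν x) (ν y) ≤ ν (x + y)) :
    IsNonarchimedean (expVal ν) := by
  intro x y
  rcases eq_or_ne x 0 with rfl | hx
  · rw [zero_add]; exact le_max_right _ _
  rcases eq_or_ne y 0 with rfl | hy
  · rw [add_zero]; exact le_max_left _ _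
  rcases eq_or_ne (x + y) 0 with hxy | hxy
  · simp only [expVal, hxy, hx, hy, if_true, if_false]; positivity
  have h := hadd x y hx hy hxy
  rw [expVal_of_ne_zero ν hx, expVal_of_ne_zero ν hy, expVal_of_ne_zero ν hxy,
    ← Real.exp_monotone.map_max, Real.exp_le_exp, le_max_iff]
  rcases le_total (ν x) (ν y) with hle | hle
  · rw [min_eq_left hle] at h
    exact Or.inl (neg_le_neg (by exact_mod_cast h))
  · rw [min_eq_right hle] at h
    exact Or.inr (neg_le_neg (by exact_mod_cast h))

noncomputable def expAbs (hmul : ∀ x y : K, x ≠ 0 → y ≠ 0 → ν (x * y) = ν x + ν y)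
    (hadd : ∀ x y : K, x ≠ 0 → y ≠ 0 → x + y ≠ 0 → min (ν x) (ν y) ≤ ν (x + y)) :
    AbsoluteValue K ℝ where
  toFun := expVal ν
  map_mul' x y := by
    rcases eq_or_ne x 0 with rfl | hx
    · simp [expVal]
    rcases eq_or_ne y 0 with rfl | hy
    · simp [expVal]
    simp only [expVal_of_ne_zero ν hx, expVal_of_ne_zero ν hy,
      expVal_of_ne_zero ν (mul_ne_zero hx hy), hmul x y hx hy, ← Real.exp_add]
    push_cast; ring_nf
  nonneg' x := by unfold expVal; split_ifs <;> positivity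
  eq_zero' x := by unfold expVal; split_ifs with h <;> simp [h, Real.exp_ne_zero]
  add_le' x y := (isNonarchimedean_expVal ν hadd).add_le
    (fun z => by unfold expVal; split_ifs <;> positivity)

end ExpAbs

lemma Nat.exists_lt_of_dvd_mul {m n j : ℕ} (hmn : m ∣ n) (hlt : m < n) (hj : 0 < j)
    (h : n ∣ m * j) : ∃ i < j, m * j = n * i := by
  obtain ⟨d, rfl⟩ := hmn
  obtain ⟨i, hi⟩ := h
  have hm : 0 < m := Nat.pos_of_ne_zero (by rintro rfl; simp at hlt)
  have hd : 2 ≤ d := by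
    by_contra! hd
    interval_cases d <;> simp at hlt
  have hji : j = d * i := Nat.eq_of_mul_eq_mul_left hm (by rw [hi, mul_assoc])
  refine ⟨i, ?_, hi⟩
  have : 0 < i := Nat.pos_of_ne_zero (by rintro rfl; simp_all)
  nlinarith

namespace Polynomial

section GaussNorm

variable {R : Type*} [CommRing R] {v : AbsoluteValue R ℝ} {c c' : ℝ}

lemma gaussNorm_pos {p : R[X]} (hp : p ≠ 0) (hc : 0 < c) : 0 < p.gaussNorm v c :=
  lt_of_lt_of_le (by simpa [hp] using pow_pos hc p.natDegree)
    (p.le_gaussNorm v hc.le p.natDegree)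

/-- Without a constant term, `c ↦ ‖p‖_c / c` is monotone. -/
lemma gaussNorm_mul_le_mul_gaussNorm {p : R[X]} (hp : p.coeff 0 = 0) (hc : 0 ≤ c)
    (h : c ≤ c') : p.gaussNorm v c * c' ≤ p.gaussNorm v c' * c := by
  obtain ⟨i, hi⟩ := p.exists_eq_gaussNorm v c
  rw [hi]
  rcases i with _ | i
  · simp [hp, mul_nonneg (p.gaussNorm_nonneg v (hc.trans h)) hc]
  calc v (p.coeff (i + 1)) * c ^ (i + 1) * c' = v (p.coeff (i + 1)) * c ^ i * (c * c') := by ring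
    _ ≤ v (p.coeff (i + 1)) * c' ^ i * (c * c') := by
        gcongr
        exact mul_nonneg hc (hc.trans h)
    _ = v (p.coeff (i + 1)) * c' ^ (i + 1) * c := by ring
    _ ≤ p.gaussNorm v c' * c := by gcongr; exact p.le_gaussNorm v (hc.trans h) _

lemma gaussNorm_lt_gaussNorm {p : R[X]} (hp0 : p.coeff 0 = 0) (hp : p ≠ 0) (hc : 0 < c)
    (h : c < c') : p.gaussNorm v c < p.gaussNorm v c' := by
  have hpos := gaussNorm_pos (v := v) hp hc
  have := gaussNorm_mul_le_mul_gaussNorm (v := v) hp0 hc.le h.le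
  nlinarith

lemma continuous_gaussNorm (p : R[X]) : Continuous fun c => p.gaussNorm v c := by
  unfold gaussNorm
  split_ifs with hp
  · exact Continuous.finset_sup'_apply hp fun i _ => by fun_prop
  · exact continuous_const

lemma gaussNorm_X_sub_C [Nontrivial R] (hc : 0 ≤ c) (w : R) :
    (X - C w).gaussNorm v c = max c (v w) := by
  refine le_antisymm ?_ (max_le ?_ ?_)
  · obtain ⟨i, hi⟩ := (X - C w).exists_eq_gaussNorm v c
    rw [hi, coeff_sub, coeff_X, coeff_C]
    rcases i with _ | _ | i <;> simp
  · calc c = v ((X - C w).coeff 1) * c ^ 1 := by simp [coeff_X]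
      _ ≤ _ := (X - C w).le_gaussNorm v hc 1
  · calc v w = v ((X - C w).coeff 0) * c ^ 0 := by simp
      _ ≤ _ := (X - C w).le_gaussNorm v hc 0

lemma gaussNorm_X [Nontrivial R] (hc : 0 ≤ c) : (X : R[X]).gaussNorm v c = c := by
  simpa [hc] using gaussNorm_X_sub_C (v := v) hc 0

variable (hna : IsNonarchimedean v) (hc : 0 < c)
include hna hc

lemma gaussNorm_pow [Nontrivial R] (p : R[X]) (n : ℕ) :
    (p ^ n).gaussNorm v c = p.gaussNorm v c ^ n :=
  haveI := gaussNorm_isAbsoluteValue hna hc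
  IsAbsoluteValue.abv_pow _ p n

lemma gaussNorm_multiset_prod [Nontrivial R] (s : Multiset R[X]) :
    s.prod.gaussNorm v c = (s.map fun p => p.gaussNorm v c).prod :=
  haveI := gaussNorm_isAbsoluteValue hna hc
  map_multiset_prod (IsAbsoluteValue.abvHom (gaussNorm v c)) s

end GaussNorm

section Frobenius

variable {R : Type*} [CommSemiring R] (p : ℕ) [ExpChar R p] (f : R[X]) (a : ℕ)

lemma coeff_pow_expChar_pow_mul (j : ℕ) : (f ^ p ^ a).coeff (p ^ a * j) = f.coeff j ^ p ^ a := by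
  rw [← map_iterateFrobenius_expand, coeff_map, coeff_expand_mul' (expChar_pow_pos R p a)]
  rfl

lemma coeff_pow_expChar_pow_of_not_dvd {k : ℕ} (hk : ¬ p ^ a ∣ k) : (f ^ p ^ a).coeff k = 0 := by
  rw [← map_iterateFrobenius_expand, coeff_map, coeff_expand (expChar_pow_pos R p a), if_neg hk,
    map_zero]

end Frobenius

lemma coeff_comp_eq_sum {R : Type*} [Semiring R] (f g : R[X]) (k : ℕ) :
    (f.comp g).coeff k = ∑ n ∈ f.support, f.coeff n * (g ^ n).coeff k := by
  rw [comp_eq_sum_left, sum, finsetSum_coeff]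
  simp only [coeff_C_mul]

section Comp

variable {K : Type*} [Field K] {v : AbsoluteValue K ℝ} (hna : IsNonarchimedean v) {c : ℝ}
  (hc : 0 < c)
include hna hc

lemma gaussNorm_C_mul_pow (a : K) (g : K[X]) (n : ℕ) :
    (C a * g ^ n).gaussNorm v c = v a * g.gaussNorm v c ^ n := by
  rw [gaussNorm_mul hna hc, gaussNorm_C, gaussNorm_pow hna hc]

lemma gaussNorm_comp_le (f g : K[X]) :
    (f.comp g).gaussNorm v c ≤ f.gaussNorm v (g.gaussNorm v c) := by
  rcases f.support.eq_empty_or_nonempty with hf | hf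
  · simp [support_eq_empty.mp hf]
  rw [comp_eq_sum_left, sum]
  refine ((isNonarchimedean_gaussNorm v hna hc.le).apply_sum_le_sup hf).trans
    (Finset.sup'_le _ _ fun n _ => ?_)
  rw [gaussNorm_C_mul_pow hna hc]
  exact f.le_gaussNorm v (g.gaussNorm_nonneg v hc.le) n

/-- If `p ^ a` and `j` are the least exponents attaining `‖f‖_{‖g‖_c}` and `‖g‖_c`, the term
`n = p ^ a` dominates the coefficient of `X ^ (p ^ a * j)` in `f.comp g`: smaller `n` lose in `f`,
and larger `n` only see coefficients of `g` below `j`. -/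
lemma gaussNorm_comp_term_lt {p : ℕ} [ExpChar K p] {f g : K[X]} (hf : IsqLin p f)
    (hg : g.coeff 0 = 0) {a j : ℕ}
    (hfa : ∀ i < p ^ a, v (f.coeff i) * g.gaussNorm v c ^ i < f.gaussNorm v (g.gaussNorm v c))
    (hgj : ∀ i < j, v (g.coeff i) * c ^ i < g.gaussNorm v c) (hj : g.coeff j ≠ 0)
    {n : ℕ} (hn : f.coeff n ≠ 0) (hne : n ≠ p ^ a) :
    v (f.coeff n * (g ^ n).coeff (p ^ a * j)) * c ^ (p ^ a * j) <
      f.gaussNorm v (g.gaussNorm v c) := by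
  set ρ := g.gaussNorm v c
  have hρ : 0 < ρ := gaussNorm_pos (by rintro rfl; simp at hj) hc
  obtain ⟨b, rfl⟩ := hf n hn
  rcases lt_or_gt_of_ne hne with hlt | hgt
  · calc v (f.coeff (p ^ b) * (g ^ p ^ b).coeff (p ^ a * j)) * c ^ (p ^ a * j)
        = v (f.coeff (p ^ b)) * (v ((g ^ p ^ b).coeff (p ^ a * j)) * c ^ (p ^ a * j)) := by
          rw [map_mul]; ring
      _ ≤ v (f.coeff (p ^ b)) * ρ ^ p ^ b := by
          gcongr
          rw [← gaussNorm_pow hna hc]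
          exact le_gaussNorm v _ hc.le _
      _ < _ := hfa _ hlt
  have hab : a ≤ b := le_of_not_gt fun h => hgt.not_ge (Nat.pow_le_pow_right (expChar_pos K p) h.le)
  have hj0 : 0 < j := Nat.pos_of_ne_zero (by rintro rfl; exact hj hg)
  by_cases hdvd : p ^ b ∣ p ^ a * j
  · obtain ⟨i, hi_lt, hi⟩ := Nat.exists_lt_of_dvd_mul (Nat.pow_dvd_pow p hab) hgt hj0 hdvd
    rw [hi, coeff_pow_expChar_pow_mul, map_mul, map_pow, pow_mul', mul_assoc, ← mul_pow]
    calc v (f.coeff (p ^ b)) * (v (g.coeff i) * c ^ i) ^ p ^ b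
        < v (f.coeff (p ^ b)) * ρ ^ p ^ b := by
          gcongr
          · exact v.pos hn
          · exact (expChar_pow_pos K p b).ne'
          · exact hgj i hi_lt
      _ ≤ _ := le_gaussNorm v f hρ.le _
  · rw [coeff_pow_expChar_pow_of_not_dvd p g b hdvd, mul_zero, map_zero, zero_mul]
    exact gaussNorm_pos (by rintro rfl; simp at hn) hρ

lemma gaussNorm_le_gaussNorm_comp {p : ℕ} [ExpChar K p] {f g : K[X]} (hf : IsqLin p f)
    (hg : g.coeff 0 = 0) : f.gaussNorm v (g.gaussNorm v c) ≤ (f.comp g).gaussNorm v c := by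
  rcases eq_or_ne g 0 with rfl | hg0
  · simp [gaussNorm_zero_right, hf.coeff_zero_eq_zero (expChar_pos K p).ne']
  rcases eq_or_ne f 0 with rfl | hf0
  · simp
  set ρ := g.gaussNorm v c
  have hρ : 0 < ρ := gaussNorm_pos hg0 hc
  obtain ⟨m, hm, hm_lt⟩ := f.exists_min_eq_gaussNorm v hρ.le
  obtain ⟨j, hj, hj_lt⟩ := g.exists_min_eq_gaussNorm v hc.le
  have hfm : f.coeff m ≠ 0 := fun h => (gaussNorm_pos hf0 hρ).ne' (hm.trans (by simp [h]))
  have hgj : g.coeff j ≠ 0 := fun h => hρ.ne' (hj.trans (by simp [h]))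
  obtain ⟨a, rfl⟩ := hf m hfm
  have hmain : v (f.coeff (p ^ a) * (g ^ p ^ a).coeff (p ^ a * j)) * c ^ (p ^ a * j) =
      f.gaussNorm v ρ := by
    rw [coeff_pow_expChar_pow_mul, map_mul, map_pow, pow_mul', mul_assoc, ← mul_pow, ← hj, hm]
  calc f.gaussNorm v ρ = v ((f.comp g).coeff (p ^ a * j)) * c ^ (p ^ a * j) := by
        rw [coeff_comp_eq_sum, hna.apply_sum_eq_of_lt (fun x => (v.map_neg x).symm)
          (mem_support_iff.mpr hfm), hmain]
        intro n hn hne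
        refine lt_of_mul_lt_mul_right ?_ (pow_nonneg hc.le (p ^ a * j))
        rw [hmain]
        exact gaussNorm_comp_term_lt hna hc hf hg hm_lt hj_lt hgj (mem_support_iff.mp hn) hne
    _ ≤ _ := le_gaussNorm v _ hc.le _

theorem gaussNorm_comp {p : ℕ} [ExpChar K p] {f g : K[X]} (hf : IsqLin p f)
    (hg : g.coeff 0 = 0) : (f.comp g).gaussNorm v c = f.gaussNorm v (g.gaussNorm v c) :=
  le_antisymm (gaussNorm_comp_le hna hc f g) (gaussNorm_le_gaussNorm_comp hna hc hf hg)

end Comp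

section Roots

variable {K : Type*} [Field K] {v : AbsoluteValue K ℝ} (hna : IsNonarchimedean v) {c : ℝ}
  (hc : 0 < c)
include hna hc

lemma gaussNorm_eq_prod_roots {Q : K[X]} (hQ : Q.Splits) (hQ0 : Q.eval 0 = 1) :
    Q.gaussNorm v c = (Q.roots.map fun w => max 1 (c / v w)).prod := by
  have hroots : ∀ w ∈ Q.roots, 0 < v w := by
    rintro w hw
    refine v.pos ?_
    rintro rfl
    exact zero_ne_one ((mem_roots'.mp hw).2.eq_zero.symm.trans hQ0)
  have hfac := hQ.eq_prod_roots
  have hlead : v Q.leadingCoeff * (Q.roots.map v).prod = 1 := by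
    have := congrArg (eval 0) hfac
    rw [hQ0, eval_mul, eval_C, eval_multiset_prod, Multiset.map_map] at this
    have := congrArg v this
    rw [map_one, map_mul, map_multiset_prod, Multiset.map_map] at this
    simpa [Function.comp_def] using this.symm
  calc Q.gaussNorm v c = v Q.leadingCoeff * (Q.roots.map fun w => max c (v w)).prod := by
        conv_lhs => rw [hfac]
        rw [gaussNorm_mul hna hc, gaussNorm_C, gaussNorm_multiset_prod hna hc, Multiset.map_map]
        simp only [Function.comp_def, gaussNorm_X_sub_C hc.le]
    _ = (Q.roots.map fun w => max c (v w) / v w).prod := by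
        rw [Multiset.prod_map_div, eq_div_iff (right_ne_zero_of_mul_eq_one hlead),
          mul_right_comm, hlead, one_mul]
    _ = _ := by
        refine congrArg _ (Multiset.map_congr rfl fun w hw => ?_)
        rw [← max_div_div_right (hroots w hw).le, div_self (hroots w hw).ne', max_comm]

end Roots

section DivX

variable {K : Type*} [Field K] {P : K[X]}

lemma X_mul_divX_of_coeff_zero (h0 : P.coeff 0 = 0) : X * P.divX = P := by
  simpa [h0] using X_mul_divX_add P

lemma eval_zero_divX : P.divX.eval 0 = P.coeff 1 := by
  rw [← coeff_zero_eq_eval_zero, coeff_divX]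

lemma mem_roots_divX_iff (h0 : P.coeff 0 = 0) (h1 : P.coeff 1 ≠ 0) {w : K} :
    w ∈ P.divX.roots ↔ w ≠ 0 ∧ P.IsRoot w := by
  have hQ : P.divX ≠ 0 := fun h => h1 (by rw [← eval_zero_divX, h, eval_zero])
  conv_rhs => rw [← X_mul_divX_of_coeff_zero h0]
  rw [mem_roots hQ, IsRoot, IsRoot, eval_mul, eval_X]
  constructor
  · rintro hw
    refine ⟨?_, by rw [hw, mul_zero]⟩
    rintro rfl
    exact h1 (eval_zero_divX.symm.trans hw)
  · rintro ⟨hw, h⟩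
    exact (mul_eq_zero.mp h).resolve_left hw

lemma gaussNorm_eq_mul_prod_roots_divX {v : AbsoluteValue K ℝ} (hna : IsNonarchimedean v)
    {c : ℝ} (hc : 0 < c) (hP : P.Splits) (h0 : P.coeff 0 = 0) (h1 : P.coeff 1 = 1) :
    P.gaussNorm v c = c * (P.divX.roots.map fun w => max 1 (c / v w)).prod := by
  have hX := X_mul_divX_of_coeff_zero h0
  have hP0 : P ≠ 0 := fun h => by simp [h] at h1
  conv_lhs => rw [← hX]
  rw [gaussNorm_mul hna hc, gaussNorm_X hc.le, gaussNorm_eq_prod_roots hna hc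
    (hP.of_dvd hP0 (Dvd.intro_left _ hX)) (eval_zero_divX.trans h1)]

end DivX

end Polynomial

section Kernel

variable {F : Type*} [Field F]

lemma mem_kerSet_iff {f : F[X]} {β : AlgebraicClosure F} :
    β ∈ kerSet f ↔ (f.map (algebraMap F (AlgebraicClosure F))).IsRoot β := by
  show aeval β f = 0 ↔ _
  rw [aeval_def, eval₂_eq_eval_map]
  rfl

open Classical in
noncomputable def nonzeroKer (f : F[X]) : Finset (AlgebraicClosure F) :=
  (f.map (algebraMap F (AlgebraicClosure F))).divX.roots.toFinset

variable {q : ℕ} (hq0 : q ≠ 0) {f : F[X]} (hf : IsqLin q f) (hf1 : f.coeff 1 = 1)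
include hq0 hf hf1

lemma mem_nonzeroKer {β : AlgebraicClosure F} : β ∈ nonzeroKer f ↔ β ≠ 0 ∧ β ∈ kerSet f := by
  classical
  rw [nonzeroKer, Multiset.mem_toFinset, mem_roots_divX_iff, mem_kerSet_iff]
  · exact (hf.map _).coeff_zero_eq_zero hq0
  · simp [hf1]

omit hq0 in
lemma IsqLin.separable (hq : (q : F) = 0) : f.Separable := by
  rw [separable_def, hf.derivative_eq hq, hf1, C_1]
  exact isCoprime_one_right

lemma gaussNorm_map_eq_mul_prod_nonzeroKer (hq : (q : F) = 0)
    {v : AbsoluteValue (AlgebraicClosure F) ℝ} (hna : IsNonarchimedean v) {r : ℝ} (hr : 0 < r) :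
    (f.map (algebraMap F (AlgebraicClosure F))).gaussNorm v r =
      r * ∏ w ∈ nonzeroKer f, max 1 (r / v w) := by
  classical
  have h0 : (f.map (algebraMap F (AlgebraicClosure F))).coeff 0 = 0 :=
    (hf.map _).coeff_zero_eq_zero hq0
  have hnodup : (f.map (algebraMap F (AlgebraicClosure F))).divX.roots.Nodup := by
    refine nodup_roots (Separable.of_mul_right (f := X) ?_)
    rw [X_mul_divX_of_coeff_zero h0]
    exact (hf.separable hf1 hq).map
  rw [gaussNorm_eq_mul_prod_roots_divX hna hr (IsAlgClosed.splits _) h0 (by simp [hf1]),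
    Finset.prod_eq_multiset_prod, nonzeroKer, Multiset.toFinset_val, hnodup.dedup]

end Kernel

section CriticalRadius

variable {F K : Type*} [Field F] [Field K] (σ : F →+* K) {v : AbsoluteValue K ℝ} {ν : F → ℚ}
  (hv : ∀ x, x ≠ 0 → v (σ x) = Real.exp (-ν x))
include hv

lemma lt_abs_mul_pow_iff {x : F} (hx : x ≠ 0) {n : ℕ} (hn : 1 < n) {r : ℝ} (hr : 0 < r) :
    r < v (σ x) * r ^ n ↔ (ν x : ℝ) / ((n : ℝ) - 1) < Real.log r := by
  have hn' : (0 : ℝ) < n - 1 := by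
    have : (1 : ℝ) < n := by exact_mod_cast hn
    linarith
  rw [hv x hx, div_lt_iff₀ hn', ← Real.log_lt_log_iff hr (by positivity), Real.log_mul
    (Real.exp_ne_zero _) (pow_ne_zero _ hr.ne'), Real.log_exp, Real.log_pow]
  constructor <;> intro h <;> linarith

lemma exp_neg_lamNu_lt_iff {q : ℕ} (hq : 2 ≤ q) {H : F[X]} (hH : IsqLin q H)
    (hdeg : 1 < H.natDegree) (h1 : H.coeff 1 ≠ 0) (hν1 : ν (H.coeff 1) = 0) {r : ℝ}
    (hr : 0 < r) : Real.exp (-lamNu q ν H) < r ↔ r < (H.map σ).gaussNorm v r := by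
  set S := {y : ℝ | ∃ i : ℕ, 1 ≤ i ∧ H.coeff (q ^ i) ≠ 0 ∧
      y = (ν (H.coeff (q ^ i)) : ℝ) / ((q : ℝ) ^ i - 1)}
  have hqi : ∀ {i : ℕ}, 1 ≤ i → 1 < q ^ i := fun hi => Nat.one_lt_pow (by omega) (by omega)
  have hS_fin : S.Finite := by
    refine (H.support.image fun n => (ν (H.coeff n) : ℝ) / ((n : ℝ) - 1)).finite_toSet.subset ?_
    rintro _ ⟨i, -, hi, rfl⟩
    exact Finset.mem_image.mpr ⟨q ^ i, mem_support_iff.mpr hi, by push_cast; rfl⟩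
  have hS_ne : S.Nonempty := by
    have hH0 : H ≠ 0 := by rintro rfl; simp at hdeg
    obtain ⟨i, hi⟩ := hH _ (leadingCoeff_ne_zero.mpr hH0)
    refine ⟨_, i, Nat.one_le_iff_ne_zero.mpr ?_, hi ▸ leadingCoeff_ne_zero.mpr hH0, rfl⟩
    rintro rfl
    simp [hi] at hdeg
  have hlam : lamNu q ν H = -sInf S := rfl
  rw [hlam, neg_neg, ← Real.lt_log_iff_exp_lt hr]
  constructor
  · intro hlt
    obtain ⟨i, hi, hci, heq⟩ := hS_ne.csInf_mem hS_fin
    have := (lt_abs_mul_pow_iff σ hv hci (hqi hi) hr).mpr (by push_cast at heq ⊢; rwa [← heq])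
    rw [← coeff_map] at this
    exact this.trans_le (le_gaussNorm v _ hr.le _)
  · intro hlt
    obtain ⟨n, hn⟩ := (H.map σ).exists_eq_gaussNorm v r
    rw [hn, coeff_map] at hlt
    have hcn : H.coeff n ≠ 0 := by rintro h; simp [h] at hlt; linarith
    obtain ⟨i, rfl⟩ := hH n hcn
    have hi : 1 ≤ i := by
      refine Nat.one_le_iff_ne_zero.mpr ?_
      rintro rfl
      simp [hv _ h1, hν1] at hlt
    refine (csInf_le hS_fin.bddBelow ⟨i, hi, hcn, rfl⟩).trans_lt ?_
    have := (lt_abs_mul_pow_iff σ hv hcn (hqi hi) hr).mp hlt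
    push_cast at this
    exact this

end CriticalRadius

section Isogeny

variable {K : Type*} [Field K] {p : ℕ} [ExpChar K p] {v : AbsoluteValue K ℝ}
  (hna : IsNonarchimedean v)
include hna

theorem criticalRadius_eq_gaussNorm_of_comp_eq {φ ψ f : K[X]} (hφ : IsqLin p φ)
    (hψ : IsqLin p ψ) (hf : IsqLin p f) (hf0 : f ≠ 0) (hφ1 : v (φ.coeff 1) = 1)
    (hcomp : f.comp φ = ψ.comp f) {Rφ Rψ : ℝ} (hRφ : 0 < Rφ)
    (hφR : ∀ r, 0 < r → (Rφ < r ↔ r < φ.gaussNorm v r))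
    (hψR : ∀ r, 0 < r → (Rψ < r ↔ r < ψ.gaussNorm v r)) :
    Rψ = f.gaussNorm v Rφ := by
  have hp0 : p ≠ 0 := (expChar_pos K p).ne'
  have key : ∀ r, 0 < r → ψ.gaussNorm v (f.gaussNorm v r) = f.gaussNorm v (φ.gaussNorm v r) :=
    fun r hr => by
      rw [← gaussNorm_comp hna hr hψ (hf.coeff_zero_eq_zero hp0), ← hcomp,
        gaussNorm_comp hna hr hf (hφ.coeff_zero_eq_zero hp0)]
  have hφ_fix : φ.gaussNorm v Rφ = Rφ := by
    refine le_antisymm (not_lt.mp fun h => lt_irrefl _ ((hφR Rφ hRφ).mpr h)) ?_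
    simpa [hφ1] using φ.le_gaussNorm v hRφ.le 1
  have hx : 0 < f.gaussNorm v Rφ := gaussNorm_pos hf0 hRφ
  refine le_antisymm (le_of_forall_gt fun s hs => ?_) (not_lt.mp fun h => ?_)
  · obtain ⟨r, hr, hfr⟩ := ((continuous_gaussNorm f).continuousAt.eventually
      (gt_mem_nhds hs)).exists_gt
    have hr0 : 0 < r := hRφ.trans hr
    have hy : 0 < f.gaussNorm v r := gaussNorm_pos hf0 hr0
    have hψy : f.gaussNorm v r < ψ.gaussNorm v (f.gaussNorm v r) := by
      rw [key r hr0]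
      exact gaussNorm_lt_gaussNorm (hf.coeff_zero_eq_zero hp0) hf0 hr0 ((hφR r hr0).mp hr)
    have hmono := gaussNorm_mul_le_mul_gaussNorm (v := v) (hψ.coeff_zero_eq_zero hp0) hy.le
      hfr.le
    refine (hψR s (hx.trans hs)).mpr ?_
    nlinarith
  · have := (hψR _ hx).mp h
    rw [key Rφ hRφ, hφ_fix] at this
    exact lt_irrefl _ this

end Isogeny

theorem exp_neg_lamNu_eq_gaussNorm_of_comp_eq {F K : Type*} [Field F] [Field K] (σ : F →+* K)
    {p : ℕ} [ExpChar K p] {v : AbsoluteValue K ℝ} (hna : IsNonarchimedean v) {ν : F → ℚ}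
    (hv : ∀ x, x ≠ 0 → v (σ x) = Real.exp (-ν x)) {q e : ℕ} (hqp : q = p ^ e) (hq2 : 2 ≤ q)
    {φ ψ f : F[X]} (hφ : IsqLin q φ) (hψ : IsqLin q ψ) (hf : IsqLin q f)
    (hdφ : 1 < φ.natDegree) (hdψ : 1 < ψ.natDegree) {a : F} (ha : a ≠ 0) (hνa : ν a = 0)
    (hφa : φ.coeff 1 = a) (hψa : ψ.coeff 1 = a) (hf1 : f.coeff 1 = 1)
    (hcomp : f.comp φ = ψ.comp f) :
    Real.exp (-lamNu q ν ψ) = (f.map σ).gaussNorm v (Real.exp (-lamNu q ν φ)) := by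
  have hlin : ∀ {h : F[X]}, IsqLin q h → IsqLin p (h.map σ) := fun hh => by
    rw [hqp] at hh
    exact (hh.map σ).of_pow
  refine criticalRadius_eq_gaussNorm_of_comp_eq hna (hlin hφ) (hlin hψ) (hlin hf) ?_ ?_
    (by rw [← map_comp, ← map_comp, hcomp]) (Real.exp_pos _)
    (fun r hr => exp_neg_lamNu_lt_iff σ hv hq2 hφ hdφ (hφa ▸ ha) (hφa ▸ hνa) hr)
    (fun r hr => exp_neg_lamNu_lt_iff σ hv hq2 hψ hdψ (hψa ▸ ha) (hψa ▸ hνa) hr)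
  · intro h
    simpa [hf1] using congrArg (coeff · 1) h
  · rw [coeff_map, hφa, hv a ha, hνa]
    simp

theorem gaussNorm_mul_gaussNorm_le_of_kerSet {F : Type*} [Field F] {q : ℕ} (hq0 : q ≠ 0)
    (hq : (q : F) = 0) {f g ℓ : F[X]} (hf : IsqLin q f) (hg : IsqLin q g) (hℓ : IsqLin q ℓ)
    (hf1 : f.coeff 1 = 1) (hg1 : g.coeff 1 = 1) (hℓ1 : ℓ.coeff 1 = 1)
    (hkerInt : kerSet f ∩ kerSet g = {0}) (hkerSum : kerSet ℓ = kerSet f + kerSet g)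
    {v : AbsoluteValue (AlgebraicClosure F) ℝ} (hna : IsNonarchimedean v) {r : ℝ} (hr : 0 < r) :
    (f.map (algebraMap F _)).gaussNorm v r * (g.map (algebraMap F _)).gaussNorm v r ≤
      r * (ℓ.map (algebraMap F _)).gaussNorm v r := by
  classical
  have h0 : ∀ {h : F[X]}, IsqLin q h → (0 : AlgebraicClosure F) ∈ kerSet h := fun hh => by
    rw [mem_kerSet_iff, IsRoot, ← coeff_zero_eq_eval_zero, (hh.map _).coeff_zero_eq_zero hq0]
  have hdisj : Disjoint (nonzeroKer f) (nonzeroKer g) := by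
    refine Finset.disjoint_left.mpr fun w hwf hwg => ?_
    rw [mem_nonzeroKer hq0 hf hf1] at hwf
    rw [mem_nonzeroKer hq0 hg hg1] at hwg
    exact hwf.1 (by simpa [hkerInt] using Set.mem_inter hwf.2 hwg.2)
  have hsub : nonzeroKer f ∪ nonzeroKer g ⊆ nonzeroKer ℓ := by
    intro w hw
    rw [mem_nonzeroKer hq0 hℓ hℓ1, hkerSum]
    rcases Finset.mem_union.mp hw with hw | hw
    · rw [mem_nonzeroKer hq0 hf hf1] at hw
      exact ⟨hw.1, by simpa using Set.add_mem_add hw.2 (h0 hg)⟩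
    · rw [mem_nonzeroKer hq0 hg hg1] at hw
      exact ⟨hw.1, by simpa using Set.add_mem_add (h0 hf) hw.2⟩
  rw [gaussNorm_map_eq_mul_prod_nonzeroKer hq0 hf hf1 hq hna hr,
    gaussNorm_map_eq_mul_prod_nonzeroKer hq0 hg hg1 hq hna hr,
    gaussNorm_map_eq_mul_prod_nonzeroKer hq0 hℓ hℓ1 hq hna hr]
  calc _ = r * (r * ∏ w ∈ nonzeroKer f ∪ nonzeroKer g, max 1 (r / v w)) := by
        rw [Finset.prod_union hdisj]; ring
    _ ≤ _ := by
        gcongr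
        exact fun _ _ _ => le_max_left _ _

theorem stmt1 {Fq F : Type*} [Field Fq] [Fintype Fq] [Field F] [Algebra Fq F]
    (q : ℕ) (hq : q = Fintype.card Fq)
    (ν : AlgebraicClosure F → ℚ)
    (hmul : ∀ x y : AlgebraicClosure F, x ≠ 0 → y ≠ 0 → ν (x * y) = ν x + ν y)
    (hadd : ∀ x y : AlgebraicClosure F, x ≠ 0 → y ≠ 0 → x + y ≠ 0 →
      min (ν x) (ν y) ≤ ν (x + y))
    (a : F) (ha : a ≠ 0) (hνa : ν (algebraMap F (AlgebraicClosure F) a) = 0)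
    (φ ψ₁ ψ₂ ψ₃ : Polynomial F)
    (hφ : IsqLin q φ) (hψ₁ : IsqLin q ψ₁) (hψ₂ : IsqLin q ψ₂) (hψ₃ : IsqLin q ψ₃)
    (hdφ : 1 < φ.natDegree) (hd₁ : 1 < ψ₁.natDegree) (hd₂ : 1 < ψ₂.natDegree)
    (hd₃ : 1 < ψ₃.natDegree)
    (hφa : φ.coeff 1 = a) (h₁a : ψ₁.coeff 1 = a) (h₂a : ψ₂.coeff 1 = a)
    (h₃a : ψ₃.coeff 1 = a)
    (f g ℓ : Polynomial F) (hf : IsqLin q f) (hg : IsqLin q g) (hℓ : IsqLin q ℓ)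
    (hfn : f.coeff 1 = 1) (hgn : g.coeff 1 = 1) (hℓn : ℓ.coeff 1 = 1)
    (hcf : f.comp φ = ψ₁.comp f) (hcg : g.comp φ = ψ₂.comp g)
    (hcℓ : ℓ.comp φ = ψ₃.comp ℓ)
    (hkerInt : kerSet f ∩ kerSet g = {0})
    (hkerSum : kerSet ℓ = kerSet f + kerSet g) :
    lamNu q (fun x => ν (algebraMap F (AlgebraicClosure F) x)) φ +
        lamNu q (fun x => ν (algebraMap F (AlgebraicClosure F) x)) ψ₃ ≤
      lamNu q (fun x => ν (algebraMap F (AlgebraicClosure F) x)) ψ₁ +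
        lamNu q (fun x => ν (algebraMap F (AlgebraicClosure F) x)) ψ₂ := by
  set σ := algebraMap F (AlgebraicClosure F)
  have hna : IsNonarchimedean (expAbs ν hmul hadd) := isNonarchimedean_expVal ν hadd
  have hv : ∀ x, x ≠ 0 → expAbs ν hmul hadd (σ x) = Real.exp (-ν (σ x)) :=
    fun x hx => expVal_of_ne_zero ν ((map_ne_zero σ).mpr hx)
  have hq2 : 2 ≤ q := hq ▸ Fintype.one_lt_card
  obtain ⟨e, hp, hqp⟩ := FiniteField.card Fq (ringChar Fq)
  rw [← hq] at hqp
  have : Fact (ringChar Fq).Prime := ⟨hp⟩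
  have : CharP F (ringChar Fq) := charP_of_injective_algebraMap (algebraMap Fq F).injective _
  have : CharP (AlgebraicClosure F) (ringChar Fq) :=
    charP_of_injective_algebraMap σ.injective _
  have hqF : (q : F) = 0 := by
    rw [hqp, Nat.cast_pow, CharP.cast_eq_zero, zero_pow e.ne_zero]
  have e₁ := exp_neg_lamNu_eq_gaussNorm_of_comp_eq σ hna hv hqp hq2 hφ hψ₁ hf hdφ hd₁ ha hνa
    hφa h₁a hfn hcf
  have e₂ := exp_neg_lamNu_eq_gaussNorm_of_comp_eq σ hna hv hqp hq2 hφ hψ₂ hg hdφ hd₂ ha hνa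
    hφa h₂a hgn hcg
  have e₃ := exp_neg_lamNu_eq_gaussNorm_of_comp_eq σ hna hv hqp hq2 hφ hψ₃ hℓ hdφ hd₃ ha hνa
    hφa h₃a hℓn hcℓ
  have key := gaussNorm_mul_gaussNorm_le_of_kerSet (by omega) hqF hf hg hℓ hfn hgn hℓn hkerInt
    hkerSum hna (Real.exp_pos (-lamNu q (fun x => ν (σ x)) φ))
  rw [← e₁, ← e₂, ← e₃, ← Real.exp_add, ← Real.exp_add, Real.exp_le_exp] at key
  linarith
end

section
/- Let L be a field containing 𝔽q, equipped with a non-archimedean additive valuation ν : L → ℝ ∪ {∞}. For a finite-dimensional 𝔽q-subspace V ⊆ L and z ∈ ℝ, set N_V(z) = #{β ∈ V : ν(β) ≥ z} (a finite number, and a power of q). Then for any two finite-dimensional 𝔽q-subspaces U, W ⊆ L and every z ∈ ℝ, one has both N_{U∩W}(z) · N_{U+W}(z) ≥ N_U(z) · N_W(z) and N_{U∩W}(z) + N_{U+W}(z) ≥ N_U(z) + N_W(z). -/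
/-- `N_V(z)` counts the elements `β` of the subspace `V` with `ν(β) ≥ z`
(where `ν(0) = ∞`, so `0` always counts). -/
noncomputable def Ncount {Fq L : Type*} [Field Fq] [Field L] [Algebra Fq L]
    (ν : L → ℝ) (V : Submodule Fq L) (z : ℝ) : ℕ :=
  Nat.card {β : L // β ∈ V ∧ (β = 0 ∨ z ≤ ν β)}

/-!
Since `ν` vanishes on `𝔽q^*`, the elements of valuation `≥ z` form an `𝔽q`-subspace `T`, and
`N_V(z) = #(V ∩ T)`. For subspaces `A = U ∩ T`, `B = W ∩ T` the dimension formula gives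
`#(A ∩ B) · #(A + B) = #A · #B`, and then `(#A - #(A ∩ B)) (#B - #(A ∩ B)) ≥ 0` gives
`#A + #B ≤ #(A ∩ B) + #(A + B)`. Finally `A ∩ B = (U ∩ W) ∩ T` and `A + B ⊆ (U + W) ∩ T`.
-/

section Valuation

variable {L : Type*} [Field L] {ν : L → ℝ}

lemma nu_one (hmul : ∀ x y : L, x ≠ 0 → y ≠ 0 → ν (x * y) = ν x + ν y) : ν 1 = 0 := by
  have h := hmul 1 1 one_ne_zero one_ne_zero
  rw [one_mul] at h
  linarith

lemma nu_pow (hmul : ∀ x y : L, x ≠ 0 → y ≠ 0 → ν (x * y) = ν x + ν y)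
    {x : L} (hx : x ≠ 0) (n : ℕ) : ν (x ^ n) = n * ν x := by
  induction n with
  | zero => simp [nu_one hmul]
  | succ n ih =>
    rw [pow_succ, hmul _ _ (pow_ne_zero n hx) hx, ih]
    push_cast
    ring

lemma nu_eq_zero_of_pow_eq_one (hmul : ∀ x y : L, x ≠ 0 → y ≠ 0 → ν (x * y) = ν x + ν y)
    {x : L} {n : ℕ} (hn : n ≠ 0) (hxn : x ^ n = 1) : ν x = 0 := by
  have hx : x ≠ 0 := by
    rintro rfl
    simp [zero_pow hn] at hxn
  have h := nu_pow hmul hx n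
  rw [hxn, nu_one hmul] at h
  exact (mul_eq_zero.mp h.symm).resolve_left (Nat.cast_ne_zero.mpr hn)

lemma nu_algebraMap_eq_zero {Fq : Type*} [Field Fq] [Fintype Fq] [Algebra Fq L]
    (hmul : ∀ x y : L, x ≠ 0 → y ≠ 0 → ν (x * y) = ν x + ν y)
    {c : Fq} (hc : c ≠ 0) : ν (algebraMap Fq L c) = 0 := by
  have hq : Fintype.card Fq - 1 ≠ 0 := by
    have := Fintype.one_lt_card (α := Fq)
    omega
  refine nu_eq_zero_of_pow_eq_one hmul hq ?_
  rw [← map_pow, FiniteField.pow_card_sub_one_eq_one c hc, map_one]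

variable (Fq : Type*) [Field Fq] [Fintype Fq] [Algebra Fq L]

def superlevelSubmodule (hmul : ∀ x y : L, x ≠ 0 → y ≠ 0 → ν (x * y) = ν x + ν y)
    (hadd : ∀ x y : L, x ≠ 0 → y ≠ 0 → x + y ≠ 0 → min (ν x) (ν y) ≤ ν (x + y))
    (z : ℝ) : Submodule Fq L where
  carrier := {β | β = 0 ∨ z ≤ ν β}
  zero_mem' := Or.inl rfl
  add_mem' {a b} ha hb := by
    by_cases ha0 : a = 0
    · simpa [ha0] using hb
    by_cases hb0 : b = 0
    · simpa [hb0] using ha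
    by_cases hab : a + b = 0
    · exact Or.inl hab
    exact Or.inr ((le_min (ha.resolve_left ha0) (hb.resolve_left hb0)).trans
      (hadd a b ha0 hb0 hab))
  smul_mem' c x hx := by
    by_cases hc : c = 0
    · simp [hc]
    by_cases hx0 : x = 0
    · simp [hx0]
    have hc' : algebraMap Fq L c ≠ 0 := (map_ne_zero _).mpr hc
    refine Or.inr ?_
    rw [Algebra.smul_def, hmul _ _ hc' hx0, nu_algebraMap_eq_zero hmul hc, zero_add]
    exact hx.resolve_left hx0

lemma Ncount_eq_natCard_inf_superlevelSubmodule
    (hmul : ∀ x y : L, x ≠ 0 → y ≠ 0 → ν (x * y) = ν x + ν y)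
    (hadd : ∀ x y : L, x ≠ 0 → y ≠ 0 → x + y ≠ 0 → min (ν x) (ν y) ≤ ν (x + y))
    (V : Submodule Fq L) (z : ℝ) :
    Ncount ν V z = Nat.card (V ⊓ superlevelSubmodule Fq hmul hadd z :) :=
  Nat.card_congr (Equiv.subtypeEquivRight fun _ => Iff.rfl)

end Valuation

lemma Nat.add_le_add_of_mul_eq_mul {a b d s : ℕ} (h : d * s = a * b) (hda : d ≤ a)
    (hdb : d ≤ b) (hd : 0 < d) : a + b ≤ d + s := by
  refine Nat.le_of_mul_le_mul_left ?_ hd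
  nlinarith [Nat.mul_le_mul (Nat.sub_le_sub_right hda d) (Nat.sub_le_sub_right hdb d),
    Nat.sub_add_cancel hda, Nat.sub_add_cancel hdb]

namespace Submodule

variable {K V : Type*} [DivisionRing K] [AddCommGroup V] [Module K V]

lemma natCard_inf_mul_natCard_sup (A B : Submodule K V) [FiniteDimensional K A]
    [FiniteDimensional K B] :
    Nat.card (A ⊓ B :) * Nat.card (A ⊔ B :) = Nat.card A * Nat.card B := by
  rw [Module.natCard_eq_pow_finrank (K := K) (V := (A ⊓ B :)),
    Module.natCard_eq_pow_finrank (K := K) (V := (A ⊔ B :)),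
    Module.natCard_eq_pow_finrank (K := K) (V := A),
    Module.natCard_eq_pow_finrank (K := K) (V := B),
    ← pow_add, ← pow_add, add_comm, finrank_sup_add_finrank_inf_eq]

variable [Finite K]

lemma natCard_mono {A B : Submodule K V} [FiniteDimensional K B] (h : A ≤ B) :
    Nat.card A ≤ Nat.card B :=
  have : Finite B := Module.finite_of_finite K
  Nat.card_le_card_of_injective _ (inclusion_injective h)

lemma natCard_add_natCard_le (A B : Submodule K V) [FiniteDimensional K A]
    [FiniteDimensional K B] :
    Nat.card A + Nat.card B ≤ Nat.card (A ⊓ B :) + Nat.card (A ⊔ B :) :=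
  have : Finite (A ⊓ B :) := Module.finite_of_finite K
  Nat.add_le_add_of_mul_eq_mul (natCard_inf_mul_natCard_sup A B) (natCard_mono inf_le_left)
    (natCard_mono inf_le_right) Nat.card_pos

variable (T U W : Submodule K V) [FiniteDimensional K U] [FiniteDimensional K W]

lemma natCard_inf_sup_inf_le : Nat.card (U ⊓ T ⊔ W ⊓ T :) ≤ Nat.card ((U ⊔ W) ⊓ T :) :=
  natCard_mono (sup_le (inf_le_inf_right T le_sup_left) (inf_le_inf_right T le_sup_right))

lemma natCard_inf_mul_natCard_inf_le :
    Nat.card (U ⊓ T :) * Nat.card (W ⊓ T :) ≤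
      Nat.card (U ⊓ W ⊓ T :) * Nat.card ((U ⊔ W) ⊓ T :) := by
  rw [← natCard_inf_mul_natCard_sup, inf_inf_inf_comm, inf_idem]
  exact Nat.mul_le_mul_left _ (natCard_inf_sup_inf_le T U W)

lemma natCard_inf_add_natCard_inf_le :
    Nat.card (U ⊓ T :) + Nat.card (W ⊓ T :) ≤
      Nat.card (U ⊓ W ⊓ T :) + Nat.card ((U ⊔ W) ⊓ T :) := by
  refine (natCard_add_natCard_le _ _).trans ?_
  rw [inf_inf_inf_comm, inf_idem]
  exact Nat.add_le_add_left (natCard_inf_sup_inf_le T U W) _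

end Submodule

theorem stmt3 {Fq L : Type*} [Field Fq] [Fintype Fq] [Field L] [Algebra Fq L]
    (ν : L → ℝ)
    (hmul : ∀ x y : L, x ≠ 0 → y ≠ 0 → ν (x * y) = ν x + ν y)
    (hadd : ∀ x y : L, x ≠ 0 → y ≠ 0 → x + y ≠ 0 → min (ν x) (ν y) ≤ ν (x + y))
    (U W : Submodule Fq L)
    (hU : FiniteDimensional Fq U) (hW : FiniteDimensional Fq W)
    (z : ℝ) :
    Ncount ν U z * Ncount ν W z ≤ Ncount ν (U ⊓ W) z * Ncount ν (U ⊔ W) z ∧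
      Ncount ν U z + Ncount ν W z ≤ Ncount ν (U ⊓ W) z + Ncount ν (U ⊔ W) z := by
  simp only [Ncount_eq_natCard_inf_superlevelSubmodule Fq hmul hadd]
  exact ⟨Submodule.natCard_inf_mul_natCard_inf_le _ U W,
    Submodule.natCard_inf_add_natCard_inf_le _ U W⟩
end

section
/- Let f, g ∈ F[X] be nonzero q-linearized polynomials. Then the composition f ∘ g is a nonzero q-linearized polynomial and for every z ∈ ℝ one has V_{f∘g}(z) = V_f(V_g(z)). -/
open Polynomial

/-- The valuation polygon `V_f(z) = min { ν(fᵢ) + qⁱ z : fᵢ ≠ 0 }` of a nonzero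
`q`-linearized polynomial. -/
noncomputable def Vpoly {F : Type*} [Field F] (q : ℕ) (ν : F → ℚ) (f : Polynomial F)
    (z : ℝ) : ℝ :=
  sInf {y : ℝ | ∃ i : ℕ, f.coeff (q ^ i) ≠ 0 ∧
    y = (ν (f.coeff (q ^ i)) : ℝ) + (q : ℝ) ^ i * z}

/-! Over `𝔽_q`, Frobenius gives `f ∘ g = Σₖ cₖ X^{q^k}` with `cₖ = Σ_{j+i=k} aⱼ bᵢ^{q^j}`, where
`aⱼ, bᵢ` are the coefficients of `X^{q^j}` in `f` and of `X^{q^i}` in `g`. The term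
`aⱼ bᵢ^{q^j}` has valuation `ν aⱼ + q^j ν bᵢ`, and `ν aⱼ + q^j (ν bᵢ + q^i z) ≥ V_f(V_g z)`, so
the ultrametric inequality gives `V_{f∘g}(z) ≥ V_f(V_g z)`. Conversely, let `i` be the largest
index attaining `V_g(z)` and `j` the largest attaining `V_f(V_g z)`: then `(j, i)` is the only
pair on the antidiagonal `j + i` whose term attains the minimum, so no cancellation occurs in
`c_{j+i}`. -/

open Finset

section Valuation

variable {R : Type*} [Ring R] {ν : R → ℚ}

theorem val_one [Nontrivial R] (hmul : ∀ x y : R, x ≠ 0 → y ≠ 0 → ν (x * y) = ν x + ν y) :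
    ν 1 = 0 := by
  have := hmul 1 1 one_ne_zero one_ne_zero
  rw [mul_one] at this
  linarith

theorem val_neg [Nontrivial R] (hmul : ∀ x y : R, x ≠ 0 → y ≠ 0 → ν (x * y) = ν x + ν y)
    {x : R} (hx : x ≠ 0) : ν (-x) = ν x := by
  have h1 := hmul (-1) (-1) (neg_ne_zero.2 one_ne_zero) (neg_ne_zero.2 one_ne_zero)
  have h2 := hmul (-1) x (neg_ne_zero.2 one_ne_zero) hx
  rw [neg_mul_neg, one_mul, val_one hmul] at h1
  rw [neg_one_mul] at h2
  linarith

theorem val_pow [NoZeroDivisors R] (hmul : ∀ x y : R, x ≠ 0 → y ≠ 0 → ν (x * y) = ν x + ν y)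
    {x : R} (hx : x ≠ 0) (n : ℕ) : ν (x ^ n) = n * ν x := by
  nontriviality R
  induction n with
  | zero => simp [val_one hmul]
  | succ n ih =>
    rw [pow_succ, hmul _ _ (pow_ne_zero _ hx) hx, ih]
    push_cast
    ring

theorem val_add_eq_of_lt [Nontrivial R]
    (hmul : ∀ x y : R, x ≠ 0 → y ≠ 0 → ν (x * y) = ν x + ν y)
    (hadd : ∀ x y : R, x ≠ 0 → y ≠ 0 → x + y ≠ 0 → min (ν x) (ν y) ≤ ν (x + y))
    {x y : R} (hx : x ≠ 0) (hy : y ≠ 0) (hlt : ν x < ν y) : x + y ≠ 0 ∧ ν (x + y) = ν x := by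
  have hxy : x + y ≠ 0 := by
    intro h
    rw [eq_neg_of_add_eq_zero_left h, val_neg hmul hy] at hlt
    exact hlt.false
  refine ⟨hxy, le_antisymm ?_ ?_⟩
  · have h := hadd (x + y) (-y) hxy (neg_ne_zero.2 hy) (by rwa [add_neg_cancel_right])
    rw [add_neg_cancel_right, val_neg hmul hy] at h
    rcases min_le_iff.1 h with h | h
    · exact h
    · exact absurd hlt h.not_gt
  · simpa [min_eq_left hlt.le] using hadd x y hx hy hxy

theorem exists_val_le_val_sum
    (hadd : ∀ x y : R, x ≠ 0 → y ≠ 0 → x + y ≠ 0 → min (ν x) (ν y) ≤ ν (x + y))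
    {ι : Type*} (s : Finset ι) (x : ι → R) (hs : ∑ i ∈ s, x i ≠ 0) :
    ∃ i ∈ s, x i ≠ 0 ∧ ν (x i) ≤ ν (∑ i ∈ s, x i) := by
  induction s using Finset.cons_induction with
  | empty => simp at hs
  | cons a s ha ih =>
    rw [sum_cons] at hs ⊢
    by_cases hS : ∑ i ∈ s, x i = 0
    · rw [hS, add_zero] at hs ⊢
      exact ⟨a, mem_cons_self a s, hs, le_rfl⟩
    by_cases hxa : x a = 0
    · rw [hxa, zero_add] at hs ⊢
      obtain ⟨i, hi, hxi, hle⟩ := ih hs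
      exact ⟨i, mem_cons_of_mem hi, hxi, hle⟩
    obtain ⟨i, hi, hxi, hle⟩ := ih hS
    rcases min_le_iff.1 (hadd _ _ hxa hS hs) with h | h
    · exact ⟨a, mem_cons_self a s, hxa, h⟩
    · exact ⟨i, mem_cons_of_mem hi, hxi, hle.trans h⟩

theorem val_sum_eq_of_forall_lt [Nontrivial R]
    (hmul : ∀ x y : R, x ≠ 0 → y ≠ 0 → ν (x * y) = ν x + ν y)
    (hadd : ∀ x y : R, x ≠ 0 → y ≠ 0 → x + y ≠ 0 → min (ν x) (ν y) ≤ ν (x + y))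
    {ι : Type*} [DecidableEq ι] {s : Finset ι} {x : ι → R} {i : ι} (hi : i ∈ s) (hxi : x i ≠ 0)
    (hlt : ∀ j ∈ s, j ≠ i → x j ≠ 0 → ν (x i) < ν (x j)) :
    ∑ j ∈ s, x j ≠ 0 ∧ ν (∑ j ∈ s, x j) = ν (x i) := by
  rw [← add_sum_erase s x hi]
  by_cases hS : ∑ j ∈ s.erase i, x j = 0
  · rw [hS, add_zero]
    exact ⟨hxi, rfl⟩
  obtain ⟨j, hj, hxj, hle⟩ := exists_val_le_val_sum hadd _ x hS
  exact val_add_eq_of_lt hmul hadd hxi hS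
    ((hlt j (mem_of_mem_erase hj) (ne_of_mem_erase hj) hxj).trans_le hle)

end Valuation

theorem coeff_pow_expChar_pow {R : Type*} [CommSemiring R] (p : ℕ) [ExpChar R p]
    (g : R[X]) (n m : ℕ) :
    (g ^ p ^ n).coeff m = if p ^ n ∣ m then g.coeff (m / p ^ n) ^ p ^ n else 0 := by
  rw [← map_iterateFrobenius_expand, coeff_map,
    coeff_expand (pow_pos (expChar_pos R p) n)]
  split_ifs
  · exact iterateFrobenius_def p n _
  · exact map_zero _

section Linearized

variable {F : Type*} [Field F] {q : ℕ} {f g : F[X]}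

theorem coeff_pow_qpow {p e : ℕ} [ExpChar F p] (hpq : q = p ^ e) (g : F[X]) (j m : ℕ) :
    (g ^ q ^ j).coeff m = if q ^ j ∣ m then g.coeff (m / q ^ j) ^ q ^ j else 0 := by
  rw [hpq, ← pow_mul]
  exact coeff_pow_expChar_pow p g _ m

theorem IsqLin.eq_sum (hq : 1 < q) (hf : IsqLin q f) {N : ℕ} (hN : f.natDegree < N) :
    f = ∑ j ∈ range N, monomial (q ^ j) (f.coeff (q ^ j)) := by
  ext n
  simp only [finsetSum_coeff, coeff_monomial]
  by_cases hn : f.coeff n = 0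
  · rw [hn]
    refine (sum_eq_zero fun j _ => ?_).symm
    split_ifs with h
    · rwa [h]
    · rfl
  obtain ⟨i, rfl⟩ := hf n hn
  have hiN : i < N := (Nat.lt_pow_self hq).trans_le ((le_natDegree_of_ne_zero hn).trans hN.le)
  rw [sum_eq_single_of_mem i (mem_range.2 hiN) fun j _ hji => if_neg fun h =>
    hji (Nat.pow_right_injective hq h), if_pos rfl]

theorem IsqLin.coeff_comp (hq : 1 < q) (hf : IsqLin q f) {N : ℕ} (hN : f.natDegree < N)
    (g : F[X]) (n : ℕ) :
    (f.comp g).coeff n = ∑ j ∈ range N, f.coeff (q ^ j) * (g ^ q ^ j).coeff n := by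
  conv_lhs => rw [hf.eq_sum hq hN]
  simp only [Polynomial.sum_comp, monomial_comp, finsetSum_coeff, coeff_C_mul]

theorem IsqLin.comp {p e : ℕ} [ExpChar F p] (hpq : q = p ^ e) (hq : 1 < q)
    (hf : IsqLin q f) (hg : IsqLin q g) : IsqLin q (f.comp g) := by
  intro n hn
  by_contra hpow
  refine hn ((hf.coeff_comp hq f.natDegree.lt_succ_self g n).trans (sum_eq_zero fun j _ => ?_))
  rw [coeff_pow_qpow hpq]
  split_ifs with hdvd
  · obtain ⟨m, rfl⟩ := hdvd
    have hm : g.coeff m = 0 := by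
      by_contra hm
      obtain ⟨i, rfl⟩ := hg m hm
      exact hpow ⟨j + i, (pow_add q j i).symm⟩
    rw [Nat.mul_div_cancel_left m (by positivity), hm, zero_pow (by positivity), mul_zero]
  · exact mul_zero _

theorem IsqLin.coeff_comp_qpow {p e : ℕ} [ExpChar F p] (hpq : q = p ^ e) (hq : 1 < q)
    (hf : IsqLin q f) (g : F[X]) (k : ℕ) :
    (f.comp g).coeff (q ^ k) =
      ∑ x ∈ antidiagonal k, f.coeff (q ^ x.1) * g.coeff (q ^ x.2) ^ q ^ x.1 := by
  have hN : f.natDegree < f.natDegree + k + 1 := by omega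
  have hdvd : ∀ j, q ^ j ∣ q ^ k ↔ j ≤ k := fun j => Nat.pow_dvd_pow_iff_le_right hq
  rw [hf.coeff_comp hq hN, Nat.sum_antidiagonal_eq_sum_range_succ_mk,
    ← sum_subset (range_subset_range.2 (by omega : k + 1 ≤ f.natDegree + k + 1))]
  · refine sum_congr rfl fun j hj => ?_
    have hjk : j ≤ k := Nat.lt_succ_iff.1 (mem_range.1 hj)
    rw [coeff_pow_qpow hpq, if_pos ((hdvd j).2 hjk), Nat.pow_div hjk (by omega)]
  · intro j _ hj
    rw [coeff_pow_qpow hpq, if_neg fun h => hj (mem_range.2 (Nat.lt_succ_of_le ((hdvd j).1 h))),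
      mul_zero]

end Linearized

section Polygon

variable {F : Type*} [Field F] {q : ℕ}

theorem Vpoly_eq_sInf_image (q : ℕ) (ν : F → ℚ) (f : F[X]) (z : ℝ) :
    Vpoly q ν f z = sInf ((fun i => (ν (f.coeff (q ^ i)) : ℝ) + (q : ℝ) ^ i * z) ''
      {i | f.coeff (q ^ i) ≠ 0}) := by
  simp only [Vpoly, Set.image, eq_comm]
  rfl

theorem finite_setOf_coeff_qpow_ne_zero (hq : 1 < q) (f : F[X]) :
    {i | f.coeff (q ^ i) ≠ 0}.Finite :=
  (f.support.finite_toSet.preimage (Nat.pow_right_injective hq).injOn).subset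
    fun _ hi => mem_support_iff.2 hi

theorem Vpoly_le (hq : 1 < q) (ν : F → ℚ) {f : F[X]} {i : ℕ} (hi : f.coeff (q ^ i) ≠ 0)
    (z : ℝ) : Vpoly q ν f z ≤ ν (f.coeff (q ^ i)) + (q : ℝ) ^ i * z := by
  rw [Vpoly_eq_sInf_image]
  exact csInf_le ((finite_setOf_coeff_qpow_ne_zero hq f).image _).bddBelow ⟨i, hi, rfl⟩

theorem IsqLin.exists_max_Vpoly_eq (hq : 1 < q) (ν : F → ℚ) {f : F[X]} (hf : IsqLin q f)
    (hf0 : f ≠ 0) (z : ℝ) :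
    ∃ i, f.coeff (q ^ i) ≠ 0 ∧ ν (f.coeff (q ^ i)) + (q : ℝ) ^ i * z = Vpoly q ν f z ∧
      ∀ i', i < i' → f.coeff (q ^ i') ≠ 0 →
        Vpoly q ν f z < ν (f.coeff (q ^ i')) + (q : ℝ) ^ i' * z := by
  set T : ℕ → ℝ := fun i => (ν (f.coeff (q ^ i)) : ℝ) + (q : ℝ) ^ i * z
  set S := {i | f.coeff (q ^ i) ≠ 0}
  have hS : S.Finite := finite_setOf_coeff_qpow_ne_zero hq f
  obtain ⟨n, hn⟩ := support_nonempty.2 hf0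
  obtain ⟨i₀, rfl⟩ := hf n (mem_support_iff.1 hn)
  have hmem : Vpoly q ν f z ∈ T '' S := by
    rw [Vpoly_eq_sInf_image]
    exact (Set.image_nonempty.2 ⟨i₀, mem_support_iff.1 hn⟩).csInf_mem (hS.image T)
  obtain ⟨i, ⟨⟨hi, hTi⟩, hmax⟩⟩ :=
    Set.exists_max_image {i ∈ S | T i = Vpoly q ν f z} id (hS.subset fun _ h => h.1)
      hmem
  refine ⟨i, hi, hTi, fun i' hii' hi' => (Vpoly_le hq ν hi' z).lt_of_ne fun h => ?_⟩
  exact (hmax i' ⟨hi', h.symm⟩).not_gt hii'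

theorem val_mul_pow_qpow {ν : F → ℚ}
    (hmul : ∀ x y : F, x ≠ 0 → y ≠ 0 → ν (x * y) = ν x + ν y)
    {a b : F} (ha : a ≠ 0) (hb : b ≠ 0) (j i : ℕ) (z : ℝ) :
    (ν (a * b ^ q ^ j) : ℝ) + (q : ℝ) ^ (j + i) * z =
      ν a + (q : ℝ) ^ j * (ν b + (q : ℝ) ^ i * z) := by
  rw [hmul _ _ ha (pow_ne_zero _ hb), val_pow hmul hb]
  push_cast
  ring

variable {p e : ℕ} [ExpChar F p] {ν : F → ℚ} {f g : F[X]}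

theorem IsqLin.Vpoly_Vpoly_le (hpq : q = p ^ e) (hq : 1 < q)
    (hmul : ∀ x y : F, x ≠ 0 → y ≠ 0 → ν (x * y) = ν x + ν y)
    (hadd : ∀ x y : F, x ≠ 0 → y ≠ 0 → x + y ≠ 0 → min (ν x) (ν y) ≤ ν (x + y))
    (hf : IsqLin q f) {k : ℕ} (hk : (f.comp g).coeff (q ^ k) ≠ 0) (z : ℝ) :
    Vpoly q ν f (Vpoly q ν g z) ≤ ν ((f.comp g).coeff (q ^ k)) + (q : ℝ) ^ k * z := by
  rw [hf.coeff_comp_qpow hpq hq] at hk ⊢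
  obtain ⟨⟨j, i⟩, hji, ht, hle⟩ := exists_val_le_val_sum hadd _ _ hk
  obtain rfl : j + i = k := HasAntidiagonal.mem_antidiagonal.1 hji
  have ha : f.coeff (q ^ j) ≠ 0 := left_ne_zero_of_mul ht
  have hb : g.coeff (q ^ i) ≠ 0 := ne_zero_pow (by positivity) (right_ne_zero_of_mul ht)
  calc Vpoly q ν f (Vpoly q ν g z)
      ≤ ν (f.coeff (q ^ j)) + (q : ℝ) ^ j * Vpoly q ν g z := Vpoly_le hq ν ha _
    _ ≤ ν (f.coeff (q ^ j)) + (q : ℝ) ^ j * (ν (g.coeff (q ^ i)) + (q : ℝ) ^ i * z) := by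
      gcongr
      exact Vpoly_le hq ν hb z
    _ = ν (f.coeff (q ^ j) * g.coeff (q ^ i) ^ q ^ j) + (q : ℝ) ^ (j + i) * z :=
      (val_mul_pow_qpow hmul ha hb j i z).symm
    _ ≤ _ := by gcongr

theorem IsqLin.exists_coeff_comp_Vpoly_eq (hpq : q = p ^ e) (hq : 1 < q)
    (hmul : ∀ x y : F, x ≠ 0 → y ≠ 0 → ν (x * y) = ν x + ν y)
    (hadd : ∀ x y : F, x ≠ 0 → y ≠ 0 → x + y ≠ 0 → min (ν x) (ν y) ≤ ν (x + y))
    (hf : IsqLin q f) (hg : IsqLin q g) (hf0 : f ≠ 0) (hg0 : g ≠ 0) (z : ℝ) :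
    ∃ k, (f.comp g).coeff (q ^ k) ≠ 0 ∧
      ν ((f.comp g).coeff (q ^ k)) + (q : ℝ) ^ k * z = Vpoly q ν f (Vpoly q ν g z) := by
  obtain ⟨i, hb, hi, hi_max⟩ := hg.exists_max_Vpoly_eq hq ν hg0 z
  obtain ⟨j, ha, hj, hj_max⟩ := hf.exists_max_Vpoly_eq hq ν hf0 (Vpoly q ν g z)
  set t : ℕ × ℕ → F := fun x => f.coeff (q ^ x.1) * g.coeff (q ^ x.2) ^ q ^ x.1
  have hlt : ∀ x ∈ antidiagonal (j + i), x ≠ (j, i) → t x ≠ 0 → ν (t (j, i)) < ν (t x) := by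
    rintro ⟨j', i'⟩ hx hne ht
    rw [HasAntidiagonal.mem_antidiagonal] at hx
    have ha' : f.coeff (q ^ j') ≠ 0 := left_ne_zero_of_mul ht
    have hb' : g.coeff (q ^ i') ≠ 0 := ne_zero_pow (by positivity) (right_ne_zero_of_mul ht)
    suffices (ν (t (j, i)) : ℝ) + (q : ℝ) ^ (j + i) * z <
        ν (t (j', i')) + (q : ℝ) ^ (j' + i') * z by
      rw [hx] at this
      exact_mod_cast lt_of_add_lt_add_right this
    rw [val_mul_pow_qpow hmul ha hb, val_mul_pow_qpow hmul ha' hb', hi, hj]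
    rcases lt_or_ge j j' with hjj | hjj
    · calc Vpoly q ν f (Vpoly q ν g z)
          < ν (f.coeff (q ^ j')) + (q : ℝ) ^ j' * Vpoly q ν g z := hj_max j' hjj ha'
        _ ≤ _ := by
          gcongr
          exact Vpoly_le hq ν hb' z
    · have hii : i < i' := by
        refine lt_of_le_of_ne (by omega) fun h => hne ?_
        subst h
        rw [show j' = j by omega]
      calc Vpoly q ν f (Vpoly q ν g z)
          ≤ ν (f.coeff (q ^ j')) + (q : ℝ) ^ j' * Vpoly q ν g z := Vpoly_le hq ν ha' _
        _ < _ := by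
          gcongr
          exact hi_max i' hii hb'
  obtain ⟨hc, hval⟩ := val_sum_eq_of_forall_lt hmul hadd (i := (j, i))
    (HasAntidiagonal.mem_antidiagonal.2 rfl) (mul_ne_zero ha (pow_ne_zero _ hb)) hlt
  refine ⟨j + i, by rwa [hf.coeff_comp_qpow hpq hq], ?_⟩
  rw [hf.coeff_comp_qpow hpq hq, hval, val_mul_pow_qpow hmul ha hb, hi, hj]

theorem IsqLin.Vpoly_comp (hpq : q = p ^ e) (hq : 1 < q)
    (hmul : ∀ x y : F, x ≠ 0 → y ≠ 0 → ν (x * y) = ν x + ν y)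
    (hadd : ∀ x y : F, x ≠ 0 → y ≠ 0 → x + y ≠ 0 → min (ν x) (ν y) ≤ ν (x + y))
    (hf : IsqLin q f) (hg : IsqLin q g) (hf0 : f ≠ 0) (hg0 : g ≠ 0) (z : ℝ) :
    Vpoly q ν (f.comp g) z = Vpoly q ν f (Vpoly q ν g z) := by
  refine IsLeast.csInf_eq ⟨?_, ?_⟩
  · obtain ⟨k, hk, hval⟩ := hf.exists_coeff_comp_Vpoly_eq hpq hq hmul hadd hg hf0 hg0 z
    exact ⟨k, hk, hval.symm⟩
  · rintro _ ⟨k, hk, rfl⟩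
    exact hf.Vpoly_Vpoly_le hpq hq hmul hadd hk z

end Polygon

theorem stmt4 {Fq F : Type*} [Field Fq] [Fintype Fq] [Field F] [Algebra Fq F]
    (q : ℕ) (hq : q = Fintype.card Fq)
    (ν : F → ℚ)
    (hmul : ∀ x y : F, x ≠ 0 → y ≠ 0 → ν (x * y) = ν x + ν y)
    (hadd : ∀ x y : F, x ≠ 0 → y ≠ 0 → x + y ≠ 0 → min (ν x) (ν y) ≤ ν (x + y))
    (f g : Polynomial F) (hf : IsqLin q f) (hg : IsqLin q g)
    (hf0 : f ≠ 0) (hg0 : g ≠ 0) :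
    IsqLin q (f.comp g) ∧ f.comp g ≠ 0 ∧
      ∀ z : ℝ, Vpoly q ν (f.comp g) z = Vpoly q ν f (Vpoly q ν g z) := by
  obtain ⟨n, hp, hcard⟩ := FiniteField.card Fq (ringChar Fq)
  have := charP_of_injective_algebraMap (algebraMap Fq F).injective (ringChar Fq)
  have := ExpChar.prime (R := F) hp
  have hpq : q = ringChar Fq ^ (n : ℕ) := hq.trans hcard
  have hq1 : 1 < q := hq ▸ Fintype.one_lt_card
  refine ⟨hf.comp hpq hq1 hg, fun h0 => ?_, hf.Vpoly_comp hpq hq1 hmul hadd hg hf0 hg0⟩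
  obtain ⟨k, hk, -⟩ := hf.exists_coeff_comp_Vpoly_eq hpq hq1 hmul hadd hg hf0 hg0 0
  exact hk (by rw [h0, coeff_zero])
end

section
/- Let F be a field containing 𝔽q, with separable closure F^sep inside an algebraic closure F̄. Let G ⊆ F^sep be a finite-dimensional 𝔽q-subspace which is stable under every F-automorphism of F^sep. Then there is a unique q-linearized polynomial f ∈ F[X] whose coefficient of X equals 1 and whose set of roots in F̄ equals G; this f is separable of degree #G = q^{dim_{𝔽q} G}, namely f(X) = c·∏_{α∈G}(X − α) with c = ∏_{β∈G∖{0}}(−β)^{−1}. -/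
/-!
Write `P_V = ∏_{α ∈ V} (X - α)` for a finite `𝔽_q`-subspace `V`. Splitting `G = V ⊕ 𝔽_q b`, the
additivity and `𝔽_q`-linearity of a `q`-linearized `P_V` give
`P_G = ∏_{c ∈ 𝔽_q} (P_V - c P_V(b)) = P_V ^ q - P_V(b) ^ (q - 1) P_V`, so by induction `P_G` is
`q`-linearized. Its coefficients are separable over `F` and fixed by every automorphism of `F̄/F`,
hence lie in `F`. A normalized `q`-linearized polynomial has derivative `1`, so it is separable and
therefore determined by its root set up to a scalar, which the coefficient of `X` pins down.
-/

open Polynomial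

section IsqLin

variable {K : Type*} [Field K] {q : ℕ} {f g : K[X]}

theorem isqLin_X : IsqLin q (X : K[X]) := fun n hn =>
  ⟨0, by rw [coeff_X] at hn; split_ifs at hn with h <;> simp_all⟩

theorem IsqLin.sub (hf : IsqLin q f) (hg : IsqLin q g) : IsqLin q (f - g) := fun n hn => by
  by_cases hfn : f.coeff n = 0
  · exact hg n fun hgn => hn (by rw [coeff_sub, hfn, hgn, sub_zero])
  · exact hf n hfn

theorem IsqLin.C_mul (hf : IsqLin q f) (a : K) : IsqLin q (C a * f) := fun n hn =>
  hf n (right_ne_zero_of_mul (coeff_C_mul f ▸ hn))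

theorem IsqLin.of_map {L : Type*} [Field L] (φ : K →+* L) (hf : IsqLin q (f.map φ)) :
    IsqLin q f := fun n hn => hf n (by rwa [coeff_map, _root_.map_ne_zero])

theorem IsqLin.derivative_eq_s10 (hq : (q : K) = 0) (hf : IsqLin q f) :
    derivative f = C (f.coeff 1) := by
  ext (_ | n)
  · simp [coeff_derivative]
  · rw [coeff_derivative, coeff_C_succ]
    by_cases hc : f.coeff (n + 2) = 0
    · rw [hc, zero_mul]
    obtain ⟨_ | i, hi⟩ := hf _ hc
    · simp at hi
    · have : ((n + 1 : ℕ) : K) + 1 = ((q ^ (i + 1) : ℕ) : K) := by rw [← hi]; push_cast; ring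
      rw [this, Nat.cast_pow, hq, zero_pow i.succ_ne_zero, mul_zero]

variable {p k : ℕ} [ExpChar K p]

theorem IsqLin.comp_sub (hf : IsqLin (p ^ k) f) (g h : K[X]) :
    f.comp (g - h) = f.comp g - f.comp h := by
  have : ExpChar K[X] p := expChar_of_injective_ringHom C_injective p
  simp only [comp_eq_sum_left, Polynomial.sum_def, ← Finset.sum_sub_distrib, ← mul_sub]
  refine Finset.sum_congr rfl fun n hn => ?_
  obtain ⟨i, rfl⟩ := hf n (mem_support_iff.mp hn)
  rw [← pow_mul, sub_pow_expChar_pow]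

theorem IsqLin.pow (hf : IsqLin (p ^ k) f) : IsqLin (p ^ k) (f ^ p ^ k) := fun n hn => by
  have hp : 0 < p ^ k := pow_pos (expChar_pos K p) k
  rw [← map_iterateFrobenius_expand, coeff_map, coeff_expand hp] at hn
  split_ifs at hn with hdvd
  · obtain ⟨i, hi⟩ := hf _ fun h => hn (by rw [h, map_zero])
    exact ⟨i + 1, by rw [← Nat.div_mul_cancel hdvd, hi, pow_succ]⟩
  · exact absurd (map_zero _) hn

end IsqLin

section FiniteField

variable {Fq K : Type*} [Field Fq] [Fintype Fq] [Field K] [Algebra Fq K]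

variable (Fq K) in
theorem FiniteField.exists_expChar_card_eq_pow :
    ∃ p k : ℕ, ExpChar K p ∧ Fintype.card Fq = p ^ k := by
  obtain ⟨p, _, n, hp, hcard⟩ := FiniteField.card' Fq
  have : Fact p.Prime := ⟨hp⟩
  exact ⟨p, n, expChar_of_injective_algebraMap (algebraMap Fq K).injective p, hcard⟩

theorem IsqLin.eval_smul {f : K[X]} (hf : IsqLin (Fintype.card Fq) f) (c : Fq) (x : K) :
    f.eval (c • x) = c • f.eval x := by
  simp only [eval_eq_sum, Polynomial.sum_def, Finset.smul_sum]
  refine Finset.sum_congr rfl fun n hn => ?_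
  obtain ⟨i, rfl⟩ := hf n (mem_support_iff.mp hn)
  rw [_root_.smul_pow, FiniteField.pow_card_pow, mul_smul_comm]

theorem prod_X_sub_C_smul {t : K} (ht : t ≠ 0) :
    ∏ c : Fq, (X - C (c • t)) = X ^ Fintype.card Fq - C (t ^ (Fintype.card Fq - 1)) * X := by
  have hq : 1 < Fintype.card Fq := Fintype.one_lt_card
  have hlt : (C (t ^ (Fintype.card Fq - 1)) * X).degree < (Fintype.card Fq : WithBot ℕ) :=
    (degree_C_mul_X_le _).trans_lt (WithBot.coe_lt_coe.mpr hq)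
  have hg := monic_X_pow_sub hlt
  have hgdeg : (X ^ Fintype.card Fq - C (t ^ (Fintype.card Fq - 1)) * X).natDegree =
      Fintype.card Fq := natDegree_eq_of_degree_eq_some ((degree_sub_eq_left_of_degree_lt
    (by rwa [degree_X_pow])).trans (degree_X_pow _))
  set s : Multiset K := (Finset.univ : Finset Fq).val.map (· • t)
  have hroots : s ≤ (X ^ Fintype.card Fq - C (t ^ (Fintype.card Fq - 1)) * X).roots := by
    refine (Multiset.le_iff_subset (Finset.univ.nodup.map (smul_left_injective Fq ht))).mpr ?_
    rintro _ hx
    obtain ⟨c, -, rfl⟩ := Multiset.mem_map.mp hx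
    rw [mem_roots hg.ne_zero, IsRoot, eval_sub, eval_pow, eval_X, eval_mul, eval_C, eval_X,
      _root_.smul_pow, FiniteField.pow_card, mul_smul_comm, ← pow_succ, Nat.sub_add_cancel hq.le,
      sub_self]
  have hprod : ∏ c : Fq, (X - C (c • t)) = (s.map fun a => X - C a).prod := by
    rw [Multiset.map_map]; rfl
  rw [hprod]
  refine (eq_of_monic_of_dvd_of_natDegree_le (monic_multisetProd_X_sub_C s) hg
    ((Multiset.prod_X_sub_C_dvd_iff_le_roots hg.ne_zero s).mpr hroots) ?_).symm
  rw [natDegree_multiset_prod_X_sub_C_eq_card, hgdeg, Multiset.card_map, Finset.card_val,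
    Finset.card_univ]

theorem IsqLin.separable_s10 {f : K[X]} (hf : IsqLin (Fintype.card Fq) f) (h1 : f.coeff 1 = 1) :
    f.Separable := by
  have hq : ((Fintype.card Fq : ℕ) : K) = 0 := by
    rw [← map_natCast (algebraMap Fq K), FiniteField.cast_card_eq_zero, map_zero]
  rw [separable_def, hf.derivative_eq_s10 hq, h1, C_1]
  exact isCoprime_one_right

end FiniteField

section SubspacePolynomial

variable {Fq K : Type*} [Field Fq] [Fintype Fq] [Field K] [Algebra Fq K] {f : K[X]}

theorem IsqLin.comp_X_sub_C (hf : IsqLin (Fintype.card Fq) f) (a : K) :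
    f.comp (X - C a) = f - C (f.eval a) := by
  obtain ⟨p, k, _, hq⟩ := FiniteField.exists_expChar_card_eq_pow Fq K
  rw [hq] at hf
  rw [hf.comp_sub, comp_X, comp_C]

theorem IsqLin.pow_card (hf : IsqLin (Fintype.card Fq) f) :
    IsqLin (Fintype.card Fq) (f ^ Fintype.card Fq) := by
  obtain ⟨p, k, _, hq⟩ := FiniteField.exists_expChar_card_eq_pow Fq K
  rw [hq] at hf ⊢
  exact hf.pow

open Submodule in
theorem prod_toFinset_sup_span_singleton {M : Type*} [CommMonoid M] (f : K → M)
    {V : Submodule Fq K} (hV : (V : Set K).Finite) {b : K} (hb : b ∉ V)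
    (hW : ((V ⊔ Fq ∙ b : Submodule Fq K) : Set K).Finite) :
    ∏ α ∈ hW.toFinset, f α = ∏ c : Fq, ∏ y ∈ hV.toFinset, f (y + c • b) := by
  classical
  have himage : hW.toFinset =
      (Finset.univ ×ˢ hV.toFinset).image fun cy : Fq × K => cy.2 + cy.1 • b := by
    ext x
    simp only [Set.Finite.mem_toFinset, SetLike.mem_coe, mem_sup, mem_span_singleton,
      Finset.mem_image, Finset.mem_product, Finset.mem_univ, true_and, Prod.exists]
    constructor
    · rintro ⟨y, hy, _, ⟨c, rfl⟩, rfl⟩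
      exact ⟨c, y, hy, rfl⟩
    · rintro ⟨c, y, hy, rfl⟩
      exact ⟨y, hy, _, ⟨c, rfl⟩, rfl⟩
  rw [himage, Finset.prod_image, Finset.prod_product]
  rintro ⟨c₁, y₁⟩ h₁ ⟨c₂, y₂⟩ h₂ heq
  simp only [Finset.coe_product, Finset.coe_univ, Set.mem_prod, Set.mem_univ, true_and,
    Set.Finite.coe_toFinset, SetLike.mem_coe] at h₁ h₂ heq
  obtain rfl : c₁ = c₂ := by
    by_contra hne
    have hdiff : (c₁ - c₂) • b = y₂ - y₁ := by rw [sub_smul]; linear_combination heq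
    refine hb ?_
    rw [← inv_smul_smul₀ (sub_ne_zero.mpr hne) b, hdiff]
    exact V.smul_mem _ (V.sub_mem h₂ h₁)
  rw [add_left_inj] at heq
  rw [heq]

open Submodule in
theorem prod_X_sub_C_sup_span_singleton {V : Submodule Fq K} (hV : (V : Set K).Finite) {b : K}
    (hb : b ∉ V) (hW : ((V ⊔ Fq ∙ b : Submodule Fq K) : Set K).Finite)
    (hP : IsqLin (Fintype.card Fq) (∏ α ∈ hV.toFinset, (X - C α))) :
    ∏ α ∈ hW.toFinset, (X - C α) =
      (∏ α ∈ hV.toFinset, (X - C α)) ^ Fintype.card Fq -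
        C ((∏ α ∈ hV.toFinset, (X - C α)).eval b ^ (Fintype.card Fq - 1)) *
          ∏ α ∈ hV.toFinset, (X - C α) := by
  set P := ∏ α ∈ hV.toFinset, (X - C α)
  have ht : P.eval b ≠ 0 := by
    rw [eval_prod, Finset.prod_ne_zero_iff]
    intro y hy
    rw [Set.Finite.mem_toFinset] at hy
    simpa [sub_eq_zero] using fun h : b = y => hb (h ▸ hy)
  have htranslate : ∀ c : Fq, ∏ y ∈ hV.toFinset, (X - C (y + c • b)) = P - C (c • P.eval b) := by
    intro c
    rw [← hP.eval_smul, ← hP.comp_X_sub_C, prod_comp]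
    refine Finset.prod_congr rfl fun y _ => ?_
    rw [sub_comp, X_comp, C_comp, sub_sub, ← C_add, add_comm]
  rw [prod_toFinset_sup_span_singleton _ hV hb, Finset.prod_congr rfl fun c _ => htranslate c]
  have hline := congrArg (·.comp P) (prod_X_sub_C_smul (Fq := Fq) ht)
  simpa only [prod_comp, sub_comp, X_comp, C_comp, mul_comp, pow_comp] using hline

-- The finiteness proof is quantified in the goal so that the induction step can rewrite the span.
open Submodule in
theorem isqLin_prod_X_sub_C_span (T : Finset K) :
    ∀ hV : (span Fq (T : Set K) : Set K).Finite,
      IsqLin (Fintype.card Fq) (∏ α ∈ hV.toFinset, (X - C α)) := by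
  classical
  induction T using Finset.induction_on with
  | empty =>
    intro hV
    have h0 : hV.toFinset = {0} := by ext; simp
    rw [h0, Finset.prod_singleton, C_0, sub_zero]
    exact isqLin_X
  | insert b T _ ih =>
    by_cases hb : b ∈ span Fq (T : Set K)
    · rwa [Finset.coe_insert, span_insert_eq_span hb]
    rw [Finset.coe_insert, span_insert, sup_comm]
    intro hW
    have hV := hW.subset (SetLike.coe_subset_coe.mpr le_sup_left)
    rw [prod_X_sub_C_sup_span_singleton hV hb hW (ih hV)]
    exact (ih hV).pow_card.sub ((ih hV).C_mul _)

theorem isqLin_prod_X_sub_C_of_finite {V : Submodule Fq K} (hV : (V : Set K).Finite) :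
    IsqLin (Fintype.card Fq) (∏ α ∈ hV.toFinset, (X - C α)) := by
  have h := isqLin_prod_X_sub_C_span (Fq := Fq) hV.toFinset
  rw [Set.Finite.coe_toFinset, Submodule.span_eq] at h
  exact h hV

theorem Submodule.card_toFinset_eq_pow_finrank {Fq M : Type*} [Field Fq] [Fintype Fq]
    [AddCommGroup M] [Module Fq M] (V : Submodule Fq M) (hV : (V : Set M).Finite) :
    hV.toFinset.card = Fintype.card Fq ^ Module.finrank Fq V := by
  have : Finite V := hV.to_subtype
  rw [← Nat.card_eq_fintype_card, ← Module.natCard_eq_pow_finrank,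
    ← Set.ncard_eq_toFinset_card _ hV]
  rfl

end SubspacePolynomial

theorem coeff_one_prod_X_sub_C {K : Type*} [CommRing K] [DecidableEq K] {S : Finset K}
    (h0 : (0 : K) ∈ S) : (∏ α ∈ S, (X - C α)).coeff 1 = ∏ β ∈ S.erase 0, -β := by
  conv_lhs => rw [← Finset.insert_erase h0]
  rw [Finset.prod_insert (Finset.notMem_erase _ _), C_0, sub_zero, ← zero_add 1, coeff_X_mul,
    coeff_zero_eq_eval_zero, eval_prod]
  simp

section Descent

variable {F E : Type*} [Field F] [Field E] [Algebra F E] [Normal F E]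

theorem mem_range_algebraMap_of_forall_algEquiv_apply_eq {x : E}
    (hx : x ∈ separableClosure F E) (hfix : ∀ σ : E ≃ₐ[F] E, σ x = x) :
    x ∈ Set.range (algebraMap F E) := by
  obtain ⟨y, hy⟩ := (InfiniteGalois.mem_range_algebraMap_iff_fixed
    (⟨x, hx⟩ : separableClosure F E)).mpr fun τ =>
      Subtype.val_injective ((τ.liftNormal_commutes E ⟨x, hx⟩).symm.trans (hfix _))
  exact ⟨y, congrArg Subtype.val hy⟩

theorem exists_map_eq_prod_X_sub_C {S : Finset E} (hsep : ∀ x ∈ S, x ∈ separableClosure F E)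
    (hstable : ∀ σ : E ≃ₐ[F] E, ∀ x ∈ S, σ x ∈ S) :
    ∃ f : F[X], f.map (algebraMap F E) = ∏ α ∈ S, (X - C α) := by
  have hsepLift : ∏ α ∈ S, (X - C α) ∈ lifts (algebraMap (separableClosure F E) E) :=
    prod_mem fun α hα => by
      rw [sub_eq_add_neg, ← C_neg]
      exact add_mem (X_mem_lifts _)
        (C_mem_lifts _ (⟨-α, neg_mem (hsep α hα)⟩ : separableClosure F E))
  have hfix : ∀ σ : E ≃ₐ[F] E, (∏ α ∈ S, (X - C α)).map (σ : E →+* E) = ∏ α ∈ S, (X - C α) := by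
    intro σ
    rw [Polynomial.map_prod]
    refine Finset.prod_nbij' σ σ.symm (hstable σ) (hstable σ.symm) (by simp) (by simp) ?_
    intro α _
    simp
  rw [← mem_lifts, lifts_iff_coeff_lifts]
  intro n
  refine mem_range_algebraMap_of_forall_algEquiv_apply_eq ?_ fun σ => ?_
  · obtain ⟨y, hy⟩ := (lifts_iff_coeff_lifts _).mp hsepLift n
    exact hy ▸ y.2
  · exact (coeff_map _ _).symm.trans (congrArg (coeff · n) (hfix σ))

end Descent

theorem eq_C_leadingCoeff_mul_prod_X_sub_C {L : Type*} [Field L] [IsAlgClosed L] {p : L[X]}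
    (hp : p.Separable) {S : Finset L} (hS : {β | p.eval β = 0} = S) :
    p = C p.leadingCoeff * ∏ α ∈ S, (X - C α) := by
  classical
  have hroots : p.roots = S.val := by
    rw [← Multiset.dedup_eq_self.mpr (nodup_roots hp), ← Multiset.toFinset_val]
    congr 1
    ext β
    simpa [mem_roots hp.ne_zero] using Set.ext_iff.mp hS β
  conv_lhs =>
    rw [← C_leadingCoeff_mul_prod_multiset_X_sub_C (p := p) IsAlgClosed.card_roots_eq_natDegree]
  rw [hroots]
  rfl

theorem isqLin_and_coeff_one_and_roots_iff {Fq F L : Type*} [Field Fq] [Fintype Fq] [Field F]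
    [Algebra Fq F] [Field L] [IsAlgClosed L] [Algebra F L] {S : Finset L}
    (hP : IsqLin (Fintype.card Fq) (∏ α ∈ S, (X - C α)))
    (hc : (∏ α ∈ S, (X - C α)).coeff 1 ≠ 0) (f : F[X]) :
    IsqLin (Fintype.card Fq) f ∧ f.coeff 1 = 1 ∧ {β : L | aeval β f = 0} = S ↔
      f.map (algebraMap F L) = C ((∏ α ∈ S, (X - C α)).coeff 1)⁻¹ * ∏ α ∈ S, (X - C α) := by
  set P := ∏ α ∈ S, (X - C α)
  constructor
  · rintro ⟨hf, h1, hroots⟩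
    have hmap := eq_C_leadingCoeff_mul_prod_X_sub_C ((hf.separable_s10 h1).map (f := algebraMap F L))
      (S := S) (by simpa only [eval_map_algebraMap] using hroots)
    have hlc : (f.map (algebraMap F L)).leadingCoeff * P.coeff 1 = 1 := by
      simpa [h1] using (congrArg (coeff · 1) hmap).symm
    rwa [← eq_inv_of_mul_eq_one_left hlc]
  · intro hmap
    refine ⟨.of_map (algebraMap F L) (hmap ▸ hP.C_mul _), ?_, ?_⟩
    · apply (algebraMap F L).injective
      rw [← coeff_map, hmap, coeff_C_mul, inv_mul_cancel₀ hc, map_one]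
    · ext β
      simp [← eval_map_algebraMap, hmap, hc, P, eval_prod, Finset.prod_eq_zero_iff, sub_eq_zero]

open scoped Classical in
theorem stmt10 {Fq F : Type*} [Field Fq] [Fintype Fq] [Field F] [Algebra Fq F]
    (q : ℕ) (hq : q = Fintype.card Fq)
    (G : Submodule Fq (AlgebraicClosure F))
    (hGfin : (G : Set (AlgebraicClosure F)).Finite)
    (hGsep : ∀ x ∈ G, x ∈ separableClosure F (AlgebraicClosure F))
    (hGgal : ∀ σ : AlgebraicClosure F ≃ₐ[F] AlgebraicClosure F, ∀ x ∈ G, σ x ∈ G) :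
    (∃! f : Polynomial F, IsqLin q f ∧ f.coeff 1 = 1 ∧
      {β : AlgebraicClosure F | Polynomial.aeval β f = 0} =
        (G : Set (AlgebraicClosure F))) ∧
    ∀ f : Polynomial F,
      (IsqLin q f ∧ f.coeff 1 = 1 ∧
        {β : AlgebraicClosure F | Polynomial.aeval β f = 0} =
          (G : Set (AlgebraicClosure F))) →
      f.Separable ∧ f.natDegree = hGfin.toFinset.card ∧
        f.natDegree = q ^ (Module.finrank Fq ↥G) ∧
        f.map (algebraMap F (AlgebraicClosure F)) =
          Polynomial.C (∏ β ∈ hGfin.toFinset.erase 0, (-β)⁻¹) *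
            ∏ α ∈ hGfin.toFinset, (Polynomial.X - Polynomial.C α) := by
  subst hq
  set S := hGfin.toFinset
  set P := ∏ α ∈ S, (X - C α)
  have hc : P.coeff 1 = ∏ β ∈ S.erase 0, -β :=
    coeff_one_prod_X_sub_C (by simp [S])
  have hc0 : P.coeff 1 ≠ 0 :=
    hc ▸ Finset.prod_ne_zero_iff.mpr fun β hβ => neg_ne_zero.mpr (Finset.ne_of_mem_erase hβ)
  have hiff : ∀ f : F[X], IsqLin (Fintype.card Fq) f ∧ f.coeff 1 = 1 ∧
      {β | aeval β f = 0} = (G : Set (AlgebraicClosure F)) ↔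
        f.map (algebraMap F (AlgebraicClosure F)) = C (P.coeff 1)⁻¹ * P := by
    simpa only [S, Set.Finite.coe_toFinset] using
      isqLin_and_coeff_one_and_roots_iff (F := F) (isqLin_prod_X_sub_C_of_finite hGfin) hc0
  rw [Finset.prod_inv_distrib, ← hc]
  obtain ⟨f₀, hf₀⟩ := exists_map_eq_prod_X_sub_C (S := S) (by simpa [S] using hGsep)
    (by simpa [S] using hGgal)
  have hmap₀ : (C (f₀.coeff 1)⁻¹ * f₀).map (algebraMap F (AlgebraicClosure F)) =
      C (P.coeff 1)⁻¹ * P := by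
    rw [Polynomial.map_mul, map_C, map_inv₀, ← coeff_map, hf₀]
  refine ⟨⟨_, (hiff _).mpr hmap₀, fun g hg => ?_⟩, fun g hg => ?_⟩
  · refine map_injective _ (algebraMap F (AlgebraicClosure F)).injective ?_
    rw [(hiff g).mp hg, hmap₀]
  · have hmap := (hiff g).mp hg
    have hdeg : g.natDegree = S.card := by
      rw [← natDegree_map (algebraMap F (AlgebraicClosure F)), hmap,
        natDegree_C_mul (inv_ne_zero hc0), natDegree_finsetProd_X_sub_C_eq_card]
    exact ⟨hg.1.separable_s10 hg.2.1, hdeg, hdeg.trans (G.card_toFinset_eq_pow_finrank hGfin), hmap⟩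
end

section
/- Let F be a field containing 𝔽q, equipped with a discrete non-archimedean additive valuation ν : F → ℤ ∪ {∞} with ν(F^*) = ℤ. Let r ≥ 1 and g₁, …, g_r ∈ F with g_r ≠ 0. Then the following are equivalent: (i) there exists c ∈ F^* such that ν(c^{q^i − 1} g_i) ≥ 0 for all 1 ≤ i ≤ r and min{ν(c^{q^i − 1} g_i) : 1 ≤ i ≤ r, g_i ≠ 0} = 0; (ii) −min{ν(g_i)/(q^i − 1) : 1 ≤ i ≤ r, g_i ≠ 0} ∈ ℤ. (In Drinfeld-module terms: the Drinfeld module φ with φ_T = T X + Σ_{i=1}^r g_i X^{q^i} has stable reduction at ν if and only if its local graded height h^ν_Gr(φ) = −min_i ν(g_i)/(q^i−1) is an integer.) -/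
/-!
Writing `d i = q ^ i - 1 > 0`, the valuation of `c ^ (d i) * g i` is `d i * ν c + ν (g i)`, which is
nonnegative iff `-ν c ≤ ν (g i) / d i` and zero iff equality holds. So `c` gives stable reduction iff
`-ν c` is the least of the finitely many slopes `ν (g i) / d i`, i.e. their minimum. As `ν` is onto `ℤ`,
such a `c` exists iff that minimum is an integer.
-/

lemma neg_le_int_div_iff {d : ℕ} (hd : 0 < d) (m v : ℤ) :
    -(m : ℝ) ≤ v / d ↔ 0 ≤ (d : ℤ) * m + v := by
  have hd' : (0 : ℝ) < d := by exact_mod_cast hd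
  rw [le_div_iff₀ hd', ← Int.cast_nonneg_iff (R := ℝ)]
  push_cast
  constructor <;> intro h <;> linarith

lemma int_div_eq_neg_iff {d : ℕ} (hd : 0 < d) (m v : ℤ) :
    (v : ℝ) / d = -m ↔ (d : ℤ) * m + v = 0 := by
  have hd' : (d : ℝ) ≠ 0 := by exact_mod_cast hd.ne'
  rw [div_eq_iff hd', ← Int.cast_eq_zero (α := ℝ)]
  push_cast
  constructor <;> intro h <;> linarith

lemma isLeast_image_int_div_iff {ι : Type*} {s : Set ι} {d : ι → ℕ} (hd : ∀ i ∈ s, 0 < d i)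
    (v : ι → ℤ) (m : ℤ) :
    IsLeast ((fun i ↦ (v i : ℝ) / d i) '' s) (-m) ↔
      (∀ i ∈ s, 0 ≤ (d i : ℤ) * m + v i) ∧ ∃ i ∈ s, (d i : ℤ) * m + v i = 0 := by
  rw [IsLeast, mem_lowerBounds, Set.forall_mem_image, Set.mem_image, and_comm]
  refine and_congr (forall₂_congr fun i hi ↦ neg_le_int_div_iff (hd i hi) m (v i)) ?_
  exact exists_congr fun i ↦ and_congr_right fun hi ↦ int_div_eq_neg_iff (hd i hi) m (v i)

lemma Set.Finite.isLeast_iff_csInf_eq {α : Type*} [ConditionallyCompleteLinearOrder α] {S : Set α}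
    (hS : S.Finite) (hne : S.Nonempty) (x : α) :
    IsLeast S x ↔ sInf S = x :=
  ⟨IsLeast.csInf_eq, fun h ↦ h ▸ ⟨hne.csInf_mem hS, fun _ hy ↦ csInf_le hS.bddBelow hy⟩⟩

section MapMul

variable {M : Type*} [MonoidWithZero M] [NoZeroDivisors M] {ν : M → ℤ}

lemma map_pow_mul_of_map_mul (hmul : ∀ x y : M, x ≠ 0 → y ≠ 0 → ν (x * y) = ν x + ν y)
    {c x : M} (hc : c ≠ 0) (hx : x ≠ 0) (n : ℕ) :
    ν (c ^ n * x) = n * ν c + ν x := by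
  induction n with
  | zero => simp
  | succ n ih =>
    rw [pow_succ', mul_assoc, hmul _ _ hc (mul_ne_zero (pow_ne_zero n hc) hx), ih]
    push_cast
    ring

lemma isLeast_image_map_div_iff (hmul : ∀ x y : M, x ≠ 0 → y ≠ 0 → ν (x * y) = ν x + ν y)
    {ι : Type*} {s : Set ι} {d : ι → ℕ} (hd : ∀ i ∈ s, 0 < d i)
    {x : ι → M} (hx : ∀ i ∈ s, x i ≠ 0) {c : M} (hc : c ≠ 0) :
    IsLeast ((fun i ↦ (ν (x i) : ℝ) / d i) '' s) (-(ν c)) ↔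
      (∀ i ∈ s, 0 ≤ ν (c ^ d i * x i)) ∧ ∃ i ∈ s, ν (c ^ d i * x i) = 0 := by
  have hval : ∀ i ∈ s, ν (c ^ d i * x i) = d i * ν c + ν (x i) :=
    fun i hi ↦ map_pow_mul_of_map_mul hmul hc (hx i hi) _
  rw [isLeast_image_int_div_iff hd]
  exact and_congr (forall₂_congr fun i hi ↦ by rw [hval i hi])
    (exists_congr fun i ↦ and_congr_right fun hi ↦ by rw [hval i hi])

end MapMul

theorem stmt18_general {Fq F : Type*} [Field Fq] [Fintype Fq] [Field F]
    (q : ℕ) (hq : q = Fintype.card Fq)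
    (ν : F → ℤ)
    (hmul : ∀ x y : F, x ≠ 0 → y ≠ 0 → ν (x * y) = ν x + ν y)
    (hsurj : ∀ n : ℤ, ∃ x : F, x ≠ 0 ∧ ν x = n)
    (r : ℕ) (hr : 1 ≤ r) (g : ℕ → F) (hgr : g r ≠ 0) :
    (∃ c : F, c ≠ 0 ∧
        (∀ i : ℕ, 1 ≤ i → i ≤ r → g i ≠ 0 → 0 ≤ ν (c ^ (q ^ i - 1) * g i)) ∧
        (∃ i : ℕ, 1 ≤ i ∧ i ≤ r ∧ g i ≠ 0 ∧ ν (c ^ (q ^ i - 1) * g i) = 0)) ↔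
      (∃ n : ℤ, (n : ℝ) =
        - sInf {y : ℝ | ∃ i : ℕ, 1 ≤ i ∧ i ≤ r ∧ g i ≠ 0 ∧
            y = (ν (g i) : ℝ) / ((q : ℝ) ^ i - 1)}) := by
  have hq1 : 1 < q := hq ▸ Fintype.one_lt_card
  set s : Set ℕ := {i | 1 ≤ i ∧ i ≤ r ∧ g i ≠ 0}
  have hd : ∀ i ∈ s, 0 < q ^ i - 1 :=
    fun i hi ↦ Nat.sub_pos_of_lt (Nat.one_lt_pow (Nat.one_le_iff_ne_zero.mp hi.1) hq1)
  set T : Set ℝ := (fun i ↦ (ν (g i) : ℝ) / ((q ^ i - 1 : ℕ) : ℝ)) '' s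
  have hS : {y : ℝ | ∃ i : ℕ, 1 ≤ i ∧ i ≤ r ∧ g i ≠ 0 ∧
      y = (ν (g i) : ℝ) / ((q : ℝ) ^ i - 1)} = T := by
    ext y
    simp [T, s, Nat.cast_sub (Nat.one_le_pow _ _ (by omega : 0 < q)), eq_comm, and_assoc]
  have hTfin : T.Finite := ((Set.finite_Icc 1 r).subset fun i hi ↦ ⟨hi.1, hi.2.1⟩).image _
  have hTne : T.Nonempty := Set.Nonempty.image _ ⟨r, hr, le_rfl, hgr⟩
  calc _ ↔ ∃ c : F, c ≠ 0 ∧ IsLeast T (-(ν c)) := exists_congr fun c ↦ and_congr_right fun hc ↦ by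
        rw [isLeast_image_map_div_iff hmul hd (fun i hi ↦ hi.2.2) hc]
        simp only [s, Set.mem_ofPred_eq, and_imp, and_assoc]
    _ ↔ ∃ n : ℤ, IsLeast T (-n) :=
      ⟨fun ⟨c, _, h⟩ ↦ ⟨_, h⟩, fun ⟨n, h⟩ ↦
        let ⟨c, hc, hcn⟩ := hsurj n
        ⟨c, hc, hcn ▸ h⟩⟩
    _ ↔ _ := by
      rw [hS]
      exact exists_congr fun n ↦ by
        rw [hTfin.isLeast_iff_csInf_eq hTne, eq_comm, neg_eq_iff_eq_neg]

theorem stmt18 {Fq F : Type*} [Field Fq] [Fintype Fq] [Field F] [Algebra Fq F]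
    (q : ℕ) (hq : q = Fintype.card Fq)
    (ν : F → ℤ)
    (hmul : ∀ x y : F, x ≠ 0 → y ≠ 0 → ν (x * y) = ν x + ν y)
    (hadd : ∀ x y : F, x ≠ 0 → y ≠ 0 → x + y ≠ 0 → min (ν x) (ν y) ≤ ν (x + y))
    (hsurj : ∀ n : ℤ, ∃ x : F, x ≠ 0 ∧ ν x = n)
    (r : ℕ) (hr : 1 ≤ r) (g : ℕ → F) (hgr : g r ≠ 0) :
    (∃ c : F, c ≠ 0 ∧
        (∀ i : ℕ, 1 ≤ i → i ≤ r → g i ≠ 0 → 0 ≤ ν (c ^ (q ^ i - 1) * g i)) ∧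
        (∃ i : ℕ, 1 ≤ i ∧ i ≤ r ∧ g i ≠ 0 ∧ ν (c ^ (q ^ i - 1) * g i) = 0)) ↔
      (∃ n : ℤ, (n : ℝ) =
        - sInf {y : ℝ | ∃ i : ℕ, 1 ≤ i ∧ i ≤ r ∧ g i ≠ 0 ∧
            y = (ν (g i) : ℝ) / ((q : ℝ) ^ i - 1)}) :=
  stmt18_general q hq ν hmul hsurj r hr g hgr
end
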